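/- arXiv:1105.4881 — 6 statements merged into one kernel-verified Lean document; each statement's English description precedes it below -/
import Mathlib

section
/- In the polynomial ring R = ℚ[x11, x22, x21, x12, x23, x13, x14, x24], the ideal I generated by x11*x22 − x21*x12, x12*x23 − x22*x13, and x13*x24 − x23*x14 equals the intersection Q1 ∩ Q2 ∩ Q3, where Q1 is the ideal generated by the six 2×2 minors x23*x14 − x13*x24, x21*x14 − x11*x24, x22*x14 − x12*x24, x12*x23 − x22*x13, x11*x23 − x21*x13, x11*x22 − x21*x12; Q2 is the ideal generated by x13, x23, x11*x22 − x21*x12; and Q3 is the ideal generated by x12, x22, x23*x14 − x13*x24. -/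
open MvPolynomial

noncomputable section

abbrev R : Type := MvPolynomial (Fin 8) ℚ

def x11 : R := X 0
def x22 : R := X 1
def x21 : R := X 2
def x12 : R := X 3
def x23 : R := X 4
def x13 : R := X 5
def x14 : R := X 6
def x24 : R := X 7

def I : Ideal R :=
  Ideal.span {x11 * x22 - x21 * x12, x12 * x23 - x22 * x13, x13 * x24 - x23 * x14}

def Q1 : Ideal R :=
  Ideal.span {x23 * x14 - x13 * x24, x21 * x14 - x11 * x24, x22 * x14 - x12 * x24,
    x12 * x23 - x22 * x13, x11 * x23 - x21 * x13, x11 * x22 - x21 * x12}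

def Q2 : Ideal R := Ideal.span {x13, x23, x11 * x22 - x21 * x12}

def Q3 : Ideal R := Ideal.span {x12, x22, x23 * x14 - x13 * x24}

/-!
The inclusion `I ≤ Q1 ⊓ Q2 ⊓ Q3` is a check on generators. Conversely, since `Q2` and `Q3` are
column ideals plus one generator of `I` each, `Q2 ⊓ Q3 ≤ (x13, x23) ⊓ (x12, x22) ⊔ I`, and this
intersection of monomial ideals is their product. So it suffices to treat
`w = r₁ x12 x13 + r₂ x12 x23 + r₃ x22 x13 + r₄ x22 x23 ∈ Q1`. Setting the second (resp. first) row
of the matrix to zero kills `Q1`, which forces `r₁` (resp. `r₄`) into the ideal of the second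
(resp. first) row; as `x2c x12 x13 ≡ x1c x12 x23` and `x1c x22 x23 ≡ x2c x12 x23` modulo `I`,
this gives `w ≡ y x12 x23 (mod I)`. Now `Q1` is prime, being the kernel of the toric map
`x_rc ↦ s_r t_c` (straighten every monomial modulo the minors into a standard one; standard
monomials have distinct images), so `y ∈ Q1`, and `Q1 x12 x23 ≤ I`.
-/

namespace MvPolynomial

variable {σ S : Type*} [CommRing S]

theorem monomial_add_single_add_single (b : σ →₀ ℕ) (a : S) (i j : σ) :
    monomial (b + Finsupp.single i 1 + Finsupp.single j 1) a = monomial b a * (X i * X j) := by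
  rw [X, X, monomial_mul, monomial_mul, mul_one, mul_one, add_assoc]

theorem sub_aeval_indicator_compl_mem (s : Set σ) (p : MvPolynomial σ S) :
    p - aeval (sᶜ.indicator X) p ∈ Ideal.span (X '' s) := by
  rw [← Ideal.Quotient.eq]
  have h : (Ideal.Quotient.mkₐ S (Ideal.span (X '' s))).comp (aeval (sᶜ.indicator X)) =
      Ideal.Quotient.mkₐ S _ := by
    ext i
    by_cases hi : i ∈ s
    · simpa [hi] using
        (Ideal.Quotient.eq_zero_iff_mem.2 (Ideal.subset_span (Set.mem_image_of_mem X hi))).symm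
    · simp [hi]
  simpa using (AlgHom.congr_fun h p).symm

theorem ker_aeval_indicator_compl (s : Set σ) :
    RingHom.ker (aeval (sᶜ.indicator X) : MvPolynomial σ S →ₐ[S] MvPolynomial σ S) =
      Ideal.span (X '' s) := by
  refine le_antisymm (fun p hp => ?_) (Ideal.span_le.2 ?_)
  · have h := sub_aeval_indicator_compl_mem s p
    rwa [RingHom.mem_ker.1 hp, sub_zero] at h
  · rintro _ ⟨i, hi, rfl⟩
    simp [hi]

theorem span_X_image_inf_span_X_image_le_mul {s t : Set σ} (hst : Disjoint s t) :
    Ideal.span (X '' s) ⊓ Ideal.span (X '' t) ≤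
      Ideal.span (X '' s) * (Ideal.span (X '' t) : Ideal (MvPolynomial σ S)) := by
  rintro w ⟨hws, hwt⟩
  set κ : MvPolynomial σ S →ₐ[S] MvPolynomial σ S := aeval (sᶜ.indicator X)
  have hsub : ∀ p ∈ Ideal.span (X '' t),
      p - κ p ∈ Ideal.span (X '' s) * Ideal.span (X '' t) := by
    intro p hp
    induction hp using Submodule.span_induction with
    | mem _ h =>
      obtain ⟨i, hi, rfl⟩ := h
      simp [κ, hst.notMem_of_mem_right hi]
    | zero => simp
    | add p q _ _ hp hq => simpa [add_sub_add_comm] using add_mem hp hq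
    | smul a p hp' hp =>
      have h : a • p - κ (a • p) = (a - κ a) * p + κ a * (p - κ p) := by simp; ring
      rw [h]
      exact add_mem (Ideal.mul_mem_mul (sub_aeval_indicator_compl_mem s a) hp')
        (Ideal.mul_mem_left _ _ hp)
  have hκw : κ w = 0 := by rwa [← RingHom.mem_ker, ker_aeval_indicator_compl]
  simpa [hκw] using hsub w hwt

end MvPolynomial

namespace Ideal

variable {S : Type*} [CommRing S]

theorem sup_span_singleton_inf_sup_span_singleton_le {A B : Ideal S} {f g : S} (hf : f ∈ B)
    (hg : g ∈ A) : (A ⊔ span {f}) ⊓ (B ⊔ span {g}) ≤ A ⊓ B ⊔ span {f, g} := by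
  rintro x ⟨hxA, hxB⟩
  obtain ⟨a, ha, _, hu, rfl⟩ := Submodule.mem_sup.1 hxA
  obtain ⟨u, rfl⟩ := mem_span_singleton'.1 hu
  obtain ⟨b, hb, _, hv, hab⟩ := Submodule.mem_sup.1 hxB
  obtain ⟨v, rfl⟩ := mem_span_singleton'.1 hv
  have hB : a - v * g ∈ B := by
    rw [show a - v * g = b - u * f by linear_combination -hab]
    exact sub_mem hb (mul_mem_left _ _ hf)
  rw [show a + u * f = (a - v * g) + (u * f + v * g) by ring]
  exact Submodule.add_mem_sup ⟨sub_mem ha (mul_mem_left _ _ hg), hB⟩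
    (mem_span_pair.2 ⟨u, v, rfl⟩)

theorem exists_eq_of_mem_span_pair_mul_span_pair {a b c d w : S}
    (hw : w ∈ span {a, b} * span {c, d}) :
    ∃ r₁ r₂ r₃ r₄, w = r₁ * (a * c) + r₂ * (a * d) + r₃ * (b * c) + r₄ * (b * d) := by
  rw [span_insert c, mul_sup, Submodule.mem_sup] at hw
  obtain ⟨_, h₁, _, h₂, rfl⟩ := hw
  obtain ⟨p, hp, rfl⟩ := mem_mul_span_singleton.1 h₁
  obtain ⟨q, hq, rfl⟩ := mem_mul_span_singleton.1 h₂
  obtain ⟨r₁, r₃, rfl⟩ := mem_span_pair.1 hp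
  obtain ⟨r₂, r₄, rfl⟩ := mem_span_pair.1 hq
  exact ⟨r₁, r₂, r₃, r₄, by ring⟩

end Ideal

theorem Finsupp.exists_eq_add_single_add_single {σ : Type*} {n : σ →₀ ℕ} {i j : σ} (hij : i ≠ j)
    (hi : n i ≠ 0) (hj : n j ≠ 0) : ∃ b, n = b + single i 1 + single j 1 := by
  classical
  have hle : single i 1 + single j 1 ≤ n := by
    intro k
    simp only [Finsupp.coe_add, Pi.add_apply, Finsupp.single_apply]
    split_ifs <;> subst_vars <;> simp_all <;> omega
  obtain ⟨b, hb⟩ := exists_add_of_le hle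
  exact ⟨b, by rw [hb]; abel⟩

namespace AdjacentMinors

open Ideal (span)

/-- `X (pos r c)` is the entry in row `r`, column `c` of the matrix
`(x11 x12 x13 x14 / x21 x22 x23 x24)`, rows and columns being counted from `0`. -/
def pos : Fin 2 → Fin 4 → Fin 8 := ![![0, 3, 5, 6], ![2, 1, 4, 7]]

def rowOf : Fin 8 → Fin 2 := ![0, 1, 1, 0, 1, 0, 0, 1]

def colOf : Fin 8 → Fin 4 := ![0, 1, 0, 1, 2, 2, 3, 3]

@[simp] theorem rowOf_pos (r : Fin 2) (c : Fin 4) : rowOf (pos r c) = r := by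
  revert r c; decide

@[simp] theorem colOf_pos (r : Fin 2) (c : Fin 4) : colOf (pos r c) = c := by
  revert r c; decide

theorem pos_one_ne_pos_zero (c d : Fin 4) : pos 1 c ≠ pos 0 d := by
  revert c d; decide

def minor (c d : Fin 4) : R := X (pos 0 c) * X (pos 1 d) - X (pos 0 d) * X (pos 1 c)

theorem minor_mem_Q1 {c d : Fin 4} (h : c < d) : minor c d ∈ Q1 := by
  fin_cases c <;> fin_cases d <;> simp at h <;> simp only [minor] <;>
    first
    | apply Ideal.subset_span; simp [pos, x11, x12, x13, x14, x21, x22, x23, x24, mul_comm]; done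
    | apply neg_mem_iff.1; apply Ideal.subset_span
      simp [pos, x11, x12, x13, x14, x21, x22, x23, x24, mul_comm]

def IsStandard (n : Fin 8 →₀ ℕ) : Prop :=
  ∀ c d : Fin 4, c < d → n (pos 1 c) = 0 ∨ n (pos 0 d) = 0

def firstRowColumn (i : Fin 8) : ℕ := if rowOf i = 0 then colOf i else 0

/-- Trading a factor `x2c x1d` (`c < d`) for `x1c x2d` modulo a minor lowers the weight by
`d - c`. -/
theorem monomial_mem_restrictSupport_sup_Q1 (n : Fin 8 →₀ ℕ) (a : ℚ) :
    monomial n a ∈ restrictSupport ℚ {n | IsStandard n} ⊔ Q1.restrictScalars ℚ := by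
  induction hw : Finsupp.weight firstRowColumn n using Nat.strong_induction_on generalizing n with
  | _ w ih =>
  by_cases hn : IsStandard n
  · exact Submodule.mem_sup_left (by simp [hn])
  simp only [IsStandard, not_forall, not_or] at hn
  obtain ⟨c, d, hcd, hc, hd⟩ := hn
  obtain ⟨b, rfl⟩ := Finsupp.exists_eq_add_single_add_single (pos_one_ne_pos_zero c d) hc hd
  have hswap : monomial (b + Finsupp.single (pos 1 c) 1 + Finsupp.single (pos 0 d) 1) a =
      monomial (b + Finsupp.single (pos 0 c) 1 + Finsupp.single (pos 1 d) 1) a -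
        monomial b a * minor c d := by
    rw [monomial_add_single_add_single, monomial_add_single_add_single, minor]
    ring
  rw [hswap]
  refine sub_mem (ih _ ?_ _ rfl) (Submodule.mem_sup_right (Q1.mul_mem_left _ (minor_mem_Q1 hcd)))
  subst hw
  simpa [firstRowColumn, Finsupp.weight_single] using hcd

theorem mem_restrictSupport_sup_Q1 (p : R) :
    p ∈ restrictSupport ℚ {n | IsStandard n} ⊔ Q1.restrictScalars ℚ := by
  induction p using MvPolynomial.induction_on' with
  | monomial n a => exact monomial_mem_restrictSupport_sup_Q1 n a
  | add p q hp hq => exact add_mem hp hq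

/-- A standard monomial fills its first row greedily from the left: each first-row exponent is
the column degree, capped by what is left of the first-row degree. -/
theorem IsStandard.first_row_eq_min {n : Fin 8 →₀ ℕ} (hn : IsStandard n) :
    n 0 = min (n 0 + n 2) (n 0 + n 3 + n 5 + n 6) ∧
    n 3 = min (n 1 + n 3) (n 0 + n 3 + n 5 + n 6 - (n 0 + n 2)) ∧
    n 5 = min (n 4 + n 5) (n 0 + n 3 + n 5 + n 6 - (n 0 + n 2) - (n 1 + n 3)) ∧
    n 6 = min (n 6 + n 7) (n 0 + n 3 + n 5 + n 6 - (n 0 + n 2) - (n 1 + n 3) - (n 4 + n 5)) := by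
  have h01 : n 2 = 0 ∨ n 3 = 0 := hn 0 1 (by decide)
  have h02 : n 2 = 0 ∨ n 5 = 0 := hn 0 2 (by decide)
  have h03 : n 2 = 0 ∨ n 6 = 0 := hn 0 3 (by decide)
  have h12 : n 1 = 0 ∨ n 5 = 0 := hn 1 2 (by decide)
  have h13 : n 1 = 0 ∨ n 6 = 0 := hn 1 3 (by decide)
  have h23 : n 4 = 0 ∨ n 6 = 0 := hn 2 3 (by decide)
  omega

def toricExp : (Fin 8 →₀ ℕ) →+ (Fin 2 ⊕ Fin 4 →₀ ℕ) :=
  Finsupp.mapDomain.addMonoidHom (Sum.inl ∘ rowOf) +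
    Finsupp.mapDomain.addMonoidHom (Sum.inr ∘ colOf)

/-- The toric map `x_rc ↦ s_r t_c`, defined on exponents so that it visibly sends monomials to
monomials. -/
def toric : R →ₐ[ℚ] MvPolynomial (Fin 2 ⊕ Fin 4) ℚ :=
  AddMonoidAlgebra.mapDomainAlgHom ℚ ℚ toricExp

theorem toric_X (i : Fin 8) : toric (X i) = X (.inl (rowOf i)) * X (.inr (colOf i)) := by
  simp [X, toric, MvPolynomial, monomial, toricExp]

theorem toricExp_injOn : Set.InjOn toricExp {n | IsStandard n} := by
  intro n hn m hm h
  have e : ∀ j, toricExp n j = toricExp m j := fun j => DFunLike.congr_fun h j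
  have e₀ := e (.inl 0)
  have e₁ := e (.inr 0)
  have e₂ := e (.inr 1)
  have e₃ := e (.inr 2)
  have e₄ := e (.inr 3)
  simp [toricExp, Finsupp.mapDomain, Finsupp.sum_fintype, Fin.sum_univ_eight, rowOf, colOf]
    at e₀ e₁ e₂ e₃ e₄
  obtain ⟨F₀, F₃, F₅, F₆⟩ := IsStandard.first_row_eq_min hn
  obtain ⟨G₀, G₃, G₅, G₆⟩ := IsStandard.first_row_eq_min hm
  have h₀ : n 0 = m 0 := by rw [F₀, G₀, e₁, e₀]
  have h₃ : n 3 = m 3 := by rw [F₃, G₃, e₂, e₁, e₀]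
  have h₅ : n 5 = m 5 := by rw [F₅, G₅, e₃, e₂, e₁, e₀]
  have h₆ : n 6 = m 6 := by rw [F₆, G₆, e₄, e₃, e₂, e₁, e₀]
  clear F₀ F₃ F₅ F₆ G₀ G₃ G₅ G₆
  ext i
  fin_cases i <;> simp <;> omega

theorem eq_zero_of_toric_eq_zero {p : R} (hp : p ∈ restrictSupport ℚ {n | IsStandard n})
    (h : toric p = 0) : p = 0 := by
  have hcoeff : Finsupp.mapDomain toricExp (AddMonoidAlgebra.coeff p) =
      Finsupp.mapDomain toricExp (AddMonoidAlgebra.coeff (0 : R)) := by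
    simpa [toric] using congrArg AddMonoidAlgebra.coeff h
  exact AddMonoidAlgebra.coeff_injective
    (Finsupp.mapDomain_injOn _ toricExp_injOn hp (by simp) hcoeff)

theorem Q1_le_ker_toric : Q1 ≤ RingHom.ker toric := by
  rw [Q1, Ideal.span_le]
  intro g hg
  simp only [Set.mem_insert_iff, Set.mem_singleton_iff] at hg
  rcases hg with rfl | rfl | rfl | rfl | rfl | rfl <;>
    simp [x11, x12, x13, x14, x21, x22, x23, x24, toric_X, rowOf, colOf] <;> ring

theorem ker_toric_le_Q1 : RingHom.ker toric ≤ Q1 := by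
  intro p hp
  obtain ⟨q, hq, r, hr, rfl⟩ := Submodule.mem_sup.1 (mem_restrictSupport_sup_Q1 p)
  have hq0 : q = 0 := by
    refine eq_zero_of_toric_eq_zero hq ?_
    have hr' : toric r = 0 := Q1_le_ker_toric hr
    simpa [hr'] using RingHom.mem_ker.1 hp
  simpa [hq0] using hr

theorem Q1_isPrime : Q1.IsPrime :=
  le_antisymm ker_toric_le_Q1 Q1_le_ker_toric ▸ RingHom.ker_isPrime toric

theorem x12_mul_x23_notMem_Q1 : x12 * x23 ∉ Q1 := fun h => by
  simpa [x12, x23, toric_X, rowOf, colOf] using Q1_le_ker_toric h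

theorem mem_I_of_eq {p : R} (a b c : R)
    (h : p = a * (x11 * x22 - x21 * x12) + b * (x12 * x23 - x22 * x13) +
      c * (x13 * x24 - x23 * x14)) : p ∈ I := by
  rw [h, I]
  refine add_mem (add_mem ?_ ?_) ?_ <;> exact Ideal.mul_mem_left _ _ (Ideal.subset_span (by simp))

theorem mem_I_sup_of_eq {p : R} (a b c y : R)
    (h : p = a * (x11 * x22 - x21 * x12) + b * (x12 * x23 - x22 * x13) +
      c * (x13 * x24 - x23 * x14) + y * (x12 * x23)) : p ∈ I ⊔ span {x12 * x23} := by
  rw [h]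
  exact add_mem (Ideal.mem_sup_left (mem_I_of_eq a b c rfl))
    (Ideal.mem_sup_right (Ideal.mul_mem_left _ _ (Ideal.mem_span_singleton_self _)))

theorem Q2_eq_sup : Q2 = span {x13, x23} ⊔ span {x11 * x22 - x21 * x12} := by
  rw [Q2, ← Ideal.span_union, Set.insert_union, Set.singleton_union]

theorem Q3_eq_sup : Q3 = span {x12, x22} ⊔ span {x23 * x14 - x13 * x24} := by
  rw [Q3, ← Ideal.span_union, Set.insert_union, Set.singleton_union]

theorem I_le_Q1 : I ≤ Q1 := by
  rw [I, Ideal.span_le]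
  simp only [Set.insert_subset_iff, Set.singleton_subset_iff, SetLike.mem_coe]
  refine ⟨Ideal.subset_span (by simp), Ideal.subset_span (by simp), ?_⟩
  rw [← neg_sub]
  exact neg_mem (Ideal.subset_span (by simp))

theorem I_le_Q2 : I ≤ Q2 := by
  rw [I, Q2_eq_sup, Ideal.span_le]
  simp only [Set.insert_subset_iff, Set.singleton_subset_iff, SetLike.mem_coe]
  exact ⟨Ideal.mem_sup_right (Ideal.mem_span_singleton_self _),
    Ideal.mem_sup_left (Ideal.mem_span_pair.2 ⟨-x22, x12, by ring⟩),
    Ideal.mem_sup_left (Ideal.mem_span_pair.2 ⟨x24, -x14, by ring⟩)⟩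

theorem I_le_Q3 : I ≤ Q3 := by
  rw [I, Q3_eq_sup, Ideal.span_le]
  simp only [Set.insert_subset_iff, Set.singleton_subset_iff, SetLike.mem_coe]
  exact ⟨Ideal.mem_sup_left (Ideal.mem_span_pair.2 ⟨-x21, x11, by ring⟩),
    Ideal.mem_sup_left (Ideal.mem_span_pair.2 ⟨x23, -x13, by ring⟩),
    Ideal.mem_sup_right (Ideal.mem_span_singleton.2 ⟨-1, by ring⟩)⟩

theorem Q2_inf_Q3_le : Q2 ⊓ Q3 ≤ span {x13, x23} ⊓ span {x12, x22} ⊔ I := by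
  have hf : x11 * x22 - x21 * x12 ∈ span {x12, x22} := Ideal.mem_span_pair.2 ⟨-x21, x11, by ring⟩
  have hg : x23 * x14 - x13 * x24 ∈ span {x13, x23} := Ideal.mem_span_pair.2 ⟨-x24, x14, by ring⟩
  have hfg : span {x11 * x22 - x21 * x12, x23 * x14 - x13 * x24} ≤ I := by
    simp only [Ideal.span_le, Set.insert_subset_iff, Set.singleton_subset_iff, SetLike.mem_coe]
    exact ⟨mem_I_of_eq 1 0 0 (by ring), mem_I_of_eq 0 0 (-1) (by ring)⟩
  rw [Q2_eq_sup, Q3_eq_sup]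
  exact (Ideal.sup_span_singleton_inf_sup_span_singleton_le hf hg).trans (sup_le_sup_left hfg _)

def killRow (r : Fin 2) : R →ₐ[ℚ] R := aeval ((Set.range (pos r))ᶜ.indicator X)

theorem ker_killRow (r : Fin 2) :
    RingHom.ker (killRow r) = span {X (pos r 0), X (pos r 1), X (pos r 2), X (pos r 3)} := by
  rw [killRow, ker_aeval_indicator_compl, ← Set.range_comp]
  congr 1
  ext
  simp [Fin.exists_fin_succ, eq_comm]

theorem Q1_le_ker_killRow (r : Fin 2) : Q1 ≤ RingHom.ker (killRow r) := by
  rw [Q1, Ideal.span_le]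
  intro g hg
  simp only [Set.mem_insert_iff, Set.mem_singleton_iff] at hg
  fin_cases r <;> rcases hg with rfl | rfl | rfl | rfl | rfl | rfl <;>
    simp [killRow, x11, x12, x13, x14, x21, x22, x23, x24, pos]

theorem span_secondRow_le_colon :
    span {x21, x22, x23, x24} ≤ (I ⊔ span {x12 * x23}).colon {x12 * x13} := by
  simp only [Ideal.span_le, Set.insert_subset_iff, Set.singleton_subset_iff, SetLike.mem_coe,
    Submodule.mem_colon_singleton, smul_eq_mul]
  exact ⟨mem_I_sup_of_eq (-x13) (-x11) 0 x11 (by ring), mem_I_sup_of_eq 0 (-x12) 0 x12 (by ring),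
    mem_I_sup_of_eq 0 0 0 x13 (by ring), mem_I_sup_of_eq 0 0 x12 x14 (by ring)⟩

theorem span_firstRow_le_colon :
    span {x11, x12, x13, x14} ≤ (I ⊔ span {x12 * x23}).colon {x22 * x23} := by
  simp only [Ideal.span_le, Set.insert_subset_iff, Set.singleton_subset_iff, SetLike.mem_coe,
    Submodule.mem_colon_singleton, smul_eq_mul]
  exact ⟨mem_I_sup_of_eq x23 0 0 x21 (by ring), mem_I_sup_of_eq 0 0 0 x22 (by ring),
    mem_I_sup_of_eq 0 (-x23) 0 x23 (by ring), mem_I_sup_of_eq 0 (-x24) (-x22) x24 (by ring)⟩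

theorem Q1_le_colon : Q1 ≤ I.colon {x12 * x23} := by
  simp only [Q1, Ideal.span_le, Set.insert_subset_iff, Set.singleton_subset_iff, SetLike.mem_coe,
    Submodule.mem_colon_singleton, smul_eq_mul]
  exact ⟨mem_I_of_eq 0 0 (-(x12 * x23)) (by ring),
    mem_I_of_eq (-(x14 * x23)) (-(x11 * x24)) (-(x11 * x22)) (by ring),
    mem_I_of_eq 0 (-(x12 * x24)) (-(x12 * x22)) (by ring), mem_I_of_eq 0 (x12 * x23) 0 (by ring),
    mem_I_of_eq (x23 * x13) (x23 * x11) 0 (by ring), mem_I_of_eq (x12 * x23) 0 0 (by ring)⟩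

theorem Q1_inf_span_inf_span_le :
    Q1 ⊓ (span {x13, x23} ⊓ span {x12, x22}) ≤ I ⊔ span {x12 * x23} := by
  rintro w ⟨hwQ1, hwA, hwB⟩
  have hprod : w ∈ span {x12, x22} * span {x13, x23} := by
    have h := span_X_image_inf_span_X_image_le_mul (S := ℚ) (s := ({3, 1} : Set (Fin 8)))
      (t := {5, 4}) (by simp)
    rw [Set.image_pair, Set.image_pair] at h
    exact h ⟨hwB, hwA⟩
  obtain ⟨r₁, r₂, r₃, r₄, rfl⟩ := Ideal.exists_eq_of_mem_span_pair_mul_span_pair hprod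
  have h₁ : r₁ ∈ RingHom.ker (killRow 1) := by
    simpa [killRow, x12, x13, x22, x23, pos] using Q1_le_ker_killRow 1 hwQ1
  have h₄ : r₄ ∈ RingHom.ker (killRow 0) := by
    simpa [killRow, x12, x13, x22, x23, pos] using Q1_le_ker_killRow 0 hwQ1
  refine add_mem (add_mem (add_mem ?_ ?_) ?_) ?_
  · simpa using span_secondRow_le_colon ((ker_killRow 1).le h₁)
  · exact Ideal.mem_sup_right (Ideal.mul_mem_left _ _ (Ideal.mem_span_singleton_self _))
  · exact Ideal.mul_mem_left _ _ (mem_I_sup_of_eq 0 (-1) 0 1 (by ring))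
  · simpa using span_firstRow_le_colon ((ker_killRow 0).le h₄)

theorem Q1_inf_sup_le : Q1 ⊓ (I ⊔ span {x12 * x23}) ≤ I := by
  rintro w ⟨hwQ1, hw⟩
  obtain ⟨i, hi, _, hy, rfl⟩ := Submodule.mem_sup.1 hw
  obtain ⟨y, rfl⟩ := Ideal.mem_span_singleton'.1 hy
  have hyQ1 : y ∈ Q1 := by
    refine (Q1_isPrime.mem_or_mem ?_).resolve_right x12_mul_x23_notMem_Q1
    simpa using sub_mem hwQ1 (I_le_Q1 hi)
  exact add_mem hi (by simpa using Q1_le_colon hyQ1)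

end AdjacentMinors

open AdjacentMinors in
theorem primary_decomposition : I = Q1 ⊓ Q2 ⊓ Q3 := by
  refine le_antisymm (le_inf (le_inf I_le_Q1 I_le_Q2) I_le_Q3) ?_
  calc Q1 ⊓ Q2 ⊓ Q3 ≤ Q1 ⊓ (Ideal.span {x13, x23} ⊓ Ideal.span {x12, x22} ⊔ I) := by
        rw [inf_assoc]
        exact inf_le_inf_left _ Q2_inf_Q3_le
    _ = Q1 ⊓ (Ideal.span {x13, x23} ⊓ Ideal.span {x12, x22}) ⊔ I := by
        rw [inf_comm, sup_comm, sup_inf_assoc_of_le _ I_le_Q1, inf_comm, sup_comm]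
    _ ≤ I := sup_le ((le_inf inf_le_left Q1_inf_span_inf_span_le).trans Q1_inf_sup_le) le_rfl

end
end

section
/- In the polynomial ring R = ℚ[x11, x22, x21, x12, x23, x13, x14, x24], the ideal Q1 generated by the six 2×2 minors of the generic 2×4 matrix with rows (x11, x12, x13, x14) and (x21, x22, x23, x24) is a prime ideal. -/
open MvPolynomial

noncomputable section

/-!
`Q1` is the kernel of the Segre map `x_ij ↦ s_i t_j` into a polynomial ring, hence prime.
For the inclusion `ker ⊆ Q1` we straighten: modulo the minors, `x_1j x_2i` with `i < j` may be
replaced by `x_1i x_2j`, which lowers the sum of the column indices of the first-row factors. So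
every polynomial is congruent modulo `Q1` to a combination of standard monomials, those in which
every first-row column is weakly left of every second-row column. A standard monomial is
determined by its row and column sums, i.e. by its image under the Segre map, so the Segre map is
injective on their span.
-/

namespace MvPolynomial

variable {σ τ k : Type*} [CommRing k]

theorem eq_zero_of_mem_restrictSupport_of_map_eq_zero
    {φ : MvPolynomial σ k →ₗ[k] MvPolynomial τ k} {μ : (σ →₀ ℕ) → τ →₀ ℕ}
    (hφ : ∀ m c, φ (monomial m c) = monomial (μ m) c) {N : Set (σ →₀ ℕ)} (hμ : N.InjOn μ)
    {p : MvPolynomial σ k} (hp : p ∈ restrictSupport k N) (hφp : φ p = 0) : p = 0 := by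
  classical
  ext d
  by_contra hd
  rw [coeff_zero] at hd
  have hdN : d ∈ N := hp (mem_support_iff.mpr hd)
  have hcoeff : coeff (μ d) (φ p) = coeff d p := by
    conv_lhs => rw [p.as_sum, map_sum]
    simp only [hφ, coeff_sum]
    rw [Finset.sum_eq_single d (fun m hm hmd => ?_) (fun h => (h (mem_support_iff.mpr hd)).elim),
      coeff_monomial, if_pos rfl]
    rw [coeff_monomial, if_neg fun h => hmd (hμ (hp hm) hdN h)]
  rw [hφp, coeff_zero] at hcoeff
  exact hd hcoeff.symm

theorem mem_sup_restrictSupport_of_reduction {J : Ideal (MvPolynomial σ k)}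
    {N : Set (σ →₀ ℕ)} (w : (σ →₀ ℕ) → ℕ)
    (hred : ∀ m ∉ N, ∃ m', w m' < w m ∧ monomial m 1 - monomial m' 1 ∈ J)
    (p : MvPolynomial σ k) : p ∈ J.restrictScalars k ⊔ restrictSupport k N := by
  suffices h : ∀ m c, monomial m c ∈ J.restrictScalars k ⊔ restrictSupport k N by
    rw [p.as_sum]
    exact Submodule.sum_mem _ fun m _ => h m _
  intro m
  induction hw : w m using Nat.strong_induction_on generalizing m with
  | _ n ih =>
    intro c
    by_cases hm : m ∈ N
    · exact Submodule.mem_sup_right (by simp [hm])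
    obtain ⟨m', hlt, hJ⟩ := hred m hm
    have hsplit : monomial m c = c • (monomial m 1 - monomial m' 1) + monomial m' c := by
      simp [smul_sub, smul_monomial]
    rw [hsplit]
    exact Submodule.add_mem _ (Submodule.mem_sup_left ((J.restrictScalars k).smul_mem c hJ))
      (ih _ (hw ▸ hlt) m' rfl c)

end MvPolynomial

theorem Ideal.mem_span_of_mem_or_neg_mem {A : Type*} [CommRing A] {s : Set A} {p : A}
    (h : p ∈ s ∨ -p ∈ s) : p ∈ Ideal.span s :=
  h.elim (fun hp => Ideal.subset_span hp) (fun hp => neg_mem_iff.mp (Ideal.subset_span hp))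

-- At the first column `j` with `a j < a' j` we get `b j ≠ 0`, so `a` vanishes right of `j`
-- and `∑ a < ∑ a'`.
theorem eq_of_add_eq_of_sum_eq {ι : Type*} [Fintype ι] [LinearOrder ι] {a b a' b' : ι → ℕ}
    (hab : ∀ i j, a j ≠ 0 → b i ≠ 0 → j ≤ i) (hab' : ∀ i j, a' j ≠ 0 → b' i ≠ 0 → j ≤ i)
    (hadd : ∀ j, a j + b j = a' j + b' j) (hsum : ∑ j, a j = ∑ j, a' j) : a = a' := by
  by_contra hne
  obtain ⟨j, hj, hmin⟩ := wellFounded_lt.has_min {j | a j ≠ a' j} (Function.ne_iff.mp hne)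
  wlog hlt : a j < a' j generalizing a b a' b'
  · exact this hab' hab (fun j => (hadd j).symm) hsum.symm (Ne.symm hne) (Ne.symm hj)
      (fun i hi => hmin i (Ne.symm hi)) (lt_of_le_of_ne (not_lt.mp hlt) (Ne.symm hj))
  have hbj : b j ≠ 0 := by have := hadd j; omega
  have hle : ∀ i, a i ≤ a' i := by
    intro i
    rcases lt_trichotomy i j with hi | rfl | hi
    · exact (not_not.mp fun h => hmin i h hi).le
    · exact hlt.le
    · have : a i = 0 := by_contra fun h => (hab j i h hbj).not_gt hi
      omega
  exact (Finset.sum_lt_sum (fun i _ => hle i) ⟨j, Finset.mem_univ _, hlt⟩).ne hsum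

section Segre

variable (k : Type*) [CommRing k] (n : ℕ)

def twoMinorsIdeal : Ideal (MvPolynomial (Fin 2 × Fin n) k) :=
  Ideal.span {X (0, i) * X (1, j) - X (0, j) * X (1, i) | (i : Fin n) (j : Fin n) (_ : i < j)}

def segreExponent : (Fin 2 × Fin n →₀ ℕ) →+ (Fin 2 ⊕ Fin n →₀ ℕ) :=
  Finsupp.mapDomain.addMonoidHom (Sum.inl ∘ Prod.fst) +
    Finsupp.mapDomain.addMonoidHom (Sum.inr ∘ Prod.snd)

def segreMap : MvPolynomial (Fin 2 × Fin n) k →ₐ[k] MvPolynomial (Fin 2 ⊕ Fin n) k :=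
  AddMonoidAlgebra.mapDomainAlgHom k k (segreExponent n)

def standardExponents : Set (Fin 2 × Fin n →₀ ℕ) :=
  {m | ∀ i j, m (0, j) ≠ 0 → m (1, i) ≠ 0 → j ≤ i}

def rowZeroColumnSum : (Fin 2 × Fin n →₀ ℕ) →+ ℕ :=
  Finsupp.weight fun p => if p.1 = 0 then (p.2 : ℕ) else 0

variable {k n}

theorem segreMap_monomial (m : Fin 2 × Fin n →₀ ℕ) (c : k) :
    segreMap k n (monomial m c) = monomial (segreExponent n m) c := by
  simp [segreMap, monomial]

theorem segreMap_X (i : Fin 2) (j : Fin n) :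
    segreMap k n (X (i, j)) = X (Sum.inl i) * X (Sum.inr j) := by
  simp [X, segreMap_monomial, segreExponent, monomial_mul]

theorem segreExponent_apply_inl (m : Fin 2 × Fin n →₀ ℕ) (i : Fin 2) :
    segreExponent n m (Sum.inl i) = ∑ j, m (i, j) := by
  induction m using Finsupp.induction_linear with
  | zero => simp
  | add m m' hm hm' => simp [hm, hm', Finset.sum_add_distrib]
  | single p e =>
    by_cases h : p.1 = i <;> simp [segreExponent, Finsupp.single_apply, Prod.ext_iff, h]

theorem segreExponent_apply_inr (m : Fin 2 × Fin n →₀ ℕ) (j : Fin n) :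
    segreExponent n m (Sum.inr j) = m (0, j) + m (1, j) := by
  induction m using Finsupp.induction_linear with
  | zero => simp
  | add m m' hm hm' => simp only [map_add, Finsupp.add_apply, hm, hm']; ring
  | single p e =>
    obtain ⟨i, j'⟩ := p
    fin_cases i <;> simp [segreExponent, Finsupp.single_apply]

variable (k n) in
theorem twoMinorsIdeal_le_ker : twoMinorsIdeal k n ≤ RingHom.ker (segreMap k n) := by
  rw [twoMinorsIdeal, Ideal.span_le]
  rintro _ ⟨i, j, -, rfl⟩
  simp [segreMap_X]
  ring

theorem segreExponent_injOn : (standardExponents n).InjOn (segreExponent n) := by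
  intro m hm m' hm' h
  have hrow : (fun j => m (0, j)) = fun j => m' (0, j) := by
    refine eq_of_add_eq_of_sum_eq hm hm' (fun j => ?_) ?_
    · simpa only [segreExponent_apply_inr] using congr($h (Sum.inr j))
    · simpa only [segreExponent_apply_inl] using congr($h (Sum.inl 0))
  ext ⟨i, j⟩
  have hcol := congr($h (Sum.inr j))
  simp only [segreExponent_apply_inr, congr_fun hrow j] at hcol
  fin_cases i
  · exact congr_fun hrow j
  · simpa using hcol

theorem exists_reduction_of_notMem_standardExponents (m : Fin 2 × Fin n →₀ ℕ)
    (hm : m ∉ standardExponents n) :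
    ∃ m', rowZeroColumnSum n m' < rowZeroColumnSum n m ∧
      monomial m (1 : k) - monomial m' 1 ∈ twoMinorsIdeal k n := by
  simp only [standardExponents, Set.mem_ofPred_eq, not_forall, not_le] at hm
  obtain ⟨i, j, hj, hi, hij⟩ := hm
  obtain ⟨d, rfl⟩ : ∃ d, m = d + Finsupp.single (0, j) 1 + Finsupp.single (1, i) 1 := by
    have hle : Finsupp.single (0, j) 1 + Finsupp.single (1, i) 1 ≤ m := by
      intro p
      simp only [Finsupp.add_apply, Finsupp.single_apply]
      split_ifs <;> simp_all [Prod.ext_iff] <;> omega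
    obtain ⟨d, hd⟩ := exists_add_of_le hle
    exact ⟨d, by rw [hd, add_comm, add_assoc]⟩
  refine ⟨d + Finsupp.single (0, i) 1 + Finsupp.single (1, j) 1, ?_, ?_⟩
  · simpa [rowZeroColumnSum, Finsupp.weight_single] using hij
  · have hminor : X (0, i) * X (1, j) - X (0, j) * X (1, i) ∈ twoMinorsIdeal k n :=
      Ideal.subset_span ⟨i, j, hij, rfl⟩
    convert (twoMinorsIdeal k n).neg_mem ((twoMinorsIdeal k n).mul_mem_left (monomial d 1) hminor)
      using 1
    simp only [monomial_add_single, pow_one]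
    ring

variable (k n)

theorem ker_segreMap : RingHom.ker (segreMap k n) = twoMinorsIdeal k n := by
  refine le_antisymm (fun p hp => ?_) (twoMinorsIdeal_le_ker k n)
  obtain ⟨q, hq, r, hr, rfl⟩ := Submodule.mem_sup.mp
    (mem_sup_restrictSupport_of_reduction (rowZeroColumnSum n)
      exists_reduction_of_notMem_standardExponents p)
  have hq' : segreMap k n q = 0 := twoMinorsIdeal_le_ker k n hq
  have hr0 : r = 0 := by
    refine eq_zero_of_mem_restrictSupport_of_map_eq_zero (φ := (segreMap k n).toLinearMap)
      segreMap_monomial segreExponent_injOn hr ?_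
    simpa [hq'] using RingHom.mem_ker.mp hp
  simpa [hr0] using hq

theorem twoMinorsIdeal_isPrime [IsDomain k] : (twoMinorsIdeal k n).IsPrime :=
  ker_segreMap k n ▸ RingHom.ker_isPrime _

end Segre

-- `entryIndex (i, j)` is the index of the variable `x_{i+1, j+1}` of `R`.
def entryIndex : Fin 2 × Fin 4 ≃ Fin 8 where
  toFun p := ![![0, 3, 5, 6], ![2, 1, 4, 7]] p.1 p.2
  invFun := ![(0, 0), (1, 1), (1, 0), (0, 1), (1, 2), (0, 2), (0, 3), (1, 3)]
  left_inv := by decide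
  right_inv := by decide

theorem Q1_eq_map_twoMinorsIdeal : Q1 = (twoMinorsIdeal ℚ 4).map (renameEquiv ℚ entryIndex) := by
  refine le_antisymm (Ideal.span_le.mpr fun g hg => ?_) ?_
  · rw [show g = renameEquiv ℚ entryIndex (rename entryIndex.symm g) by simp [rename_rename]]
    refine Ideal.mem_map_of_mem _ (Ideal.mem_span_of_mem_or_neg_mem ?_)
    simp only [Set.mem_insert_iff, Set.mem_singleton_iff] at hg
    rcases hg with rfl | rfl | rfl | rfl | rfl | rfl <;>
      simp [entryIndex, Fin.exists_fin_succ, x11, x12, x13, x14, x21, x22, x23, x24] <;> grind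
  · rw [twoMinorsIdeal, Ideal.map_span, Ideal.span_le, Q1]
    rintro _ ⟨_, ⟨i, j, hij, rfl⟩, rfl⟩
    refine Ideal.mem_span_of_mem_or_neg_mem ?_
    fin_cases i <;> fin_cases j <;> simp at hij <;>
      simp [entryIndex, x11, x12, x13, x14, x21, x22, x23, x24] <;> grind

theorem Q1_isPrime : Q1.IsPrime := by
  have := twoMinorsIdeal_isPrime ℚ 4
  rw [Q1_eq_map_twoMinorsIdeal]
  infer_instance
end
end

section
/- In the polynomial ring R = ℚ[x11, x22, x21, x12, x23, x13, x14, x24], the ideal Q2 generated by x13, x23, and x11*x22 − x21*x12 is a prime ideal. -/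
/-!
Setting `x13` and `x23` to zero is a retraction of `R` whose kernel is `(x13, x23)`, and it fixes
`x11 * x22 - x21 * x12`; hence `Q2` is the preimage under it of the principal ideal of that
determinant. The determinant has degree one in `x11`, with coprime coefficients `x22` and
`x21 * x12`, so it is irreducible, hence prime in the factorial ring `R`, and preimages of prime
ideals are prime.
-/

open MvPolynomial

noncomputable section

namespace MvPolynomial

section

variable {σ A : Type*} [CommRing A]

def zeroVars (s : Set σ) : MvPolynomial σ A →ₐ[A] MvPolynomial σ A :=
  aeval (sᶜ.indicator X)

variable {s : Set σ}

theorem zeroVars_X_of_mem {i : σ} (hi : i ∈ s) : zeroVars s (X i : MvPolynomial σ A) = 0 := by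
  simp [zeroVars, hi]

theorem zeroVars_eq_self {p : MvPolynomial σ A} (hp : ∀ i ∈ p.vars, i ∉ s) :
    zeroVars s p = p := by
  conv_rhs => rw [← aeval_X_left_apply p]
  refine hom_congr_vars (by ext; simp [zeroVars]) (fun i hi _ => ?_) rfl
  simp [zeroVars, hp i hi]

theorem sub_zeroVars_mem_span_X_image (p : MvPolynomial σ A) :
    p - zeroVars s p ∈ Ideal.span (X '' s) := by
  rw [← Ideal.Quotient.eq]
  suffices (Ideal.Quotient.mkₐ A _).comp (zeroVars s) =
      Ideal.Quotient.mkₐ A (Ideal.span (X '' s)) from (DFunLike.congr_fun this p).symm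
  refine algHom_ext fun i => ?_
  by_cases hi : i ∈ s
  · simp only [AlgHom.comp_apply, zeroVars_X_of_mem hi, map_zero, Ideal.Quotient.mkₐ_eq_mk]
    exact (Ideal.Quotient.eq_zero_iff_mem.mpr
      (Ideal.subset_span (Set.mem_image_of_mem X hi))).symm
  · simp [zeroVars, hi]

theorem span_X_image_sup_eq_comap_zeroVars {J : Ideal (MvPolynomial σ A)}
    (hJ : ∀ p ∈ J, zeroVars s p ∈ J) :
    Ideal.span (X '' s) ⊔ J = J.comap (zeroVars s) := by
  refine le_antisymm (sup_le ?_ hJ) fun p hp => ?_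
  · rw [Ideal.span_le]
    rintro _ ⟨i, hi, rfl⟩
    simp [zeroVars_X_of_mem hi]
  · rw [← sub_add_cancel p (zeroVars s p)]
    exact Ideal.add_mem _ (Ideal.mem_sup_left (sub_zeroVars_mem_span_X_image p))
      (Ideal.mem_sup_right hp)

theorem isPrime_span_X_image_sup_span_singleton {f : MvPolynomial σ A} (hf : Prime f)
    (hfs : ∀ i ∈ f.vars, i ∉ s) :
    (Ideal.span (X '' s) ⊔ Ideal.span {f}).IsPrime := by
  have : (Ideal.span {f}).IsPrime := (Ideal.span_singleton_prime hf.ne_zero).mpr hf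
  rw [span_X_image_sup_eq_comap_zeroVars fun p hp => ?_]
  · exact Ideal.IsPrime.comap _
  obtain ⟨q, rfl⟩ := Ideal.mem_span_singleton'.mp hp
  rw [map_mul, zeroVars_eq_self hfs]
  exact Ideal.mul_mem_left _ _ (Ideal.mem_span_singleton_self f)

end

theorem prime_X_mul_X_sub_X_mul_X {σ D : Type*} [CommRing D] [IsDomain D]
    [UniqueFactorizationMonoid D] {i j k l : σ} (hij : i ≠ j) (hik : i ≠ k) (hil : i ≠ l)
    (hjk : j ≠ k) (hjl : j ≠ l) :
    Prime (X i * X j - X k * X l : MvPolynomial σ D) := by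
  classical
  have hrel : IsRelPrime (X j) (-(X k * X l) : MvPolynomial σ D) := by
    rw [X_prime.irreducible.isRelPrime_iff_not_dvd, dvd_neg, X_prime.dvd_mul]
    simp [hjk, hjl]
  have hvars : i ∉ (-(X k * X l) : MvPolynomial σ D).vars := by
    rw [vars_neg]
    intro hi
    simpa [vars_X, hik, hil] using vars_mul _ _ hi
  rw [← UniqueFactorizationMonoid.irreducible_iff_prime, sub_eq_add_neg, mul_comm]
  exact irreducible_mul_X_add _ _ i (X_ne_zero j) (by simp [vars_X, hij]) hvars hrel

end MvPolynomial

theorem Q2_isPrime : Q2.IsPrime := by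
  have hQ2 : Q2 = Ideal.span (X '' {5, 4}) ⊔ Ideal.span {X 0 * X 1 - X 2 * X 3} := by
    rw [Set.image_insert_eq, Set.image_singleton, ← Ideal.span_union, Set.insert_union,
      Set.singleton_union]
    rfl
  rw [hQ2]
  refine isPrime_span_X_image_sup_span_singleton
    (prime_X_mul_X_sub_X_mul_X (by decide) (by decide) (by decide) (by decide) (by decide))
    fun i hi => ?_
  rcases Finset.mem_union.mp (vars_sub_subset _ hi) with h | h <;>
  · have := vars_mul _ _ h
    simp only [vars_X, Finset.mem_union, Finset.mem_singleton] at this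
    obtain rfl | rfl := this <;> decide

end
end

section
/- In the polynomial ring R = ℚ[x11, x22, x21, x12, x23, x13, x14, x24], the ideal Q3 generated by x12, x22, and x23*x14 − x13*x24 is a prime ideal. -/
open MvPolynomial

noncomputable section

/-!
Let `ψ` be the substitution `x12, x22 ↦ 0`. Every `p` is congruent to `ψ p` modulo `(x12, x22)`,
and `ψ` fixes `q = x23 x14 - x13 x24`, so `Q3 = (x12, x22) + (q)` is the preimage under `ψ` of the
principal ideal `(q)`. That ideal is prime: as a polynomial in `x23` over the remaining variables,
`q` is linear with coefficients `x14` and `x13 x24`, which are coprime.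
-/

namespace MvPolynomial

variable {σ A : Type*} [CommRing A]

theorem prime_X_mul_X_sub_X_mul_X_s3 [IsDomain A] [UniqueFactorizationMonoid A] {a b c d : σ}
    (hba : b ≠ a) (hca : c ≠ a) (hda : d ≠ a) (hcb : c ≠ b) (hdb : d ≠ b) :
    Prime (X a * X b - X c * X d : MvPolynomial σ A) := by
  classical
  let e := (renameEquiv A (Equiv.optionSubtypeNe a).symm).trans (optionEquivLeft A {i // i ≠ a})
  have hX : Prime (X ⟨b, hba⟩ : MvPolynomial {i // i ≠ a} A) := X_prime
  have hrel : IsRelPrime (X ⟨b, hba⟩ : MvPolynomial {i // i ≠ a} A)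
      (-(X ⟨c, hca⟩ * X ⟨d, hda⟩)) := by
    rw [hX.irreducible.isRelPrime_iff_not_dvd, dvd_neg]
    intro h
    rcases hX.dvd_or_dvd h with h | h <;> simp_all [X_dvd_X, Subtype.ext_iff]
  have he : e (X a * X b - X c * X d) = Polynomial.C (X ⟨b, hba⟩) * Polynomial.X +
      Polynomial.C (-(X ⟨c, hca⟩ * X ⟨d, hda⟩)) := by
    simp [e, hba, hca, hda, optionEquivLeft_X_some, optionEquivLeft_X_none]
    ring
  rw [← MulEquiv.prime_iff e, he, ← UniqueFactorizationMonoid.irreducible_iff_prime]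
  exact Polynomial.irreducible_C_mul_X_add_C (X_ne_zero _) hrel

theorem sub_aeval_indicator_compl_mem_span_X_image (s : Set σ) (p : MvPolynomial σ A) :
    p - aeval (sᶜ.indicator X) p ∈ Ideal.span (X '' s) := by
  rw [← Ideal.Quotient.mk_eq_mk_iff_sub_mem]
  suffices h : (Ideal.Quotient.mkₐ A _).comp (aeval (sᶜ.indicator X)) =
      Ideal.Quotient.mkₐ A (Ideal.span (X '' s)) from congr($h p).symm
  ext i
  by_cases hi : i ∈ s
  · simp only [AlgHom.comp_apply, aeval_X, Set.indicator_of_notMem (Set.notMem_compl_iff.mpr hi),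
      map_zero]
    exact (Ideal.Quotient.eq_zero_iff_mem.mpr (Ideal.subset_span (Set.mem_image_of_mem X hi))).symm
  · simp [hi]

theorem aeval_indicator_compl_eq_self {s : Set σ} {p : MvPolynomial σ A}
    (hp : p ∈ supported A sᶜ) : aeval (sᶜ.indicator X) p = p := by
  rw [supported_eq_range_rename, AlgHom.mem_range] at hp
  obtain ⟨q, rfl⟩ := hp
  have h : sᶜ.indicator X ∘ Subtype.val = (X ∘ Subtype.val : ↥sᶜ → MvPolynomial σ A) :=
    _root_.funext fun i => Set.indicator_of_mem i.2 X
  rw [aeval_rename, h, rename_eq_aeval]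

theorem isPrime_span_X_image_sup_span_singleton_s3 {s : Set σ} {q : MvPolynomial σ A}
    (hq : Prime q) (hqs : q ∈ supported A sᶜ) :
    (Ideal.span (X '' s) ⊔ Ideal.span {q}).IsPrime := by
  have hprime := (Ideal.span_singleton_prime hq.ne_zero).mpr hq
  suffices h : Ideal.span (X '' s) ⊔ Ideal.span {q} =
      (Ideal.span {q}).comap (aeval (R := A) (sᶜ.indicator X)) from h ▸ Ideal.IsPrime.comap _
  apply le_antisymm
  · rw [sup_le_iff, Ideal.span_le, Ideal.span_le]
    constructor
    · rintro _ ⟨i, hi, rfl⟩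
      simp [hi]
    · rintro _ rfl
      rw [SetLike.mem_coe, Ideal.mem_comap, aeval_indicator_compl_eq_self hqs]
      exact Ideal.mem_span_singleton_self _
  · intro p hp
    rw [← sub_add_cancel p (aeval (sᶜ.indicator X) p)]
    exact add_mem (Ideal.mem_sup_left (sub_aeval_indicator_compl_mem_span_X_image s p))
      (Ideal.mem_sup_right hp)

end MvPolynomial

theorem Q3_isPrime : Q3.IsPrime := by
  have hq : Prime (x23 * x14 - x13 * x24) := prime_X_mul_X_sub_X_mul_X_s3 (by decide) (by decide)
    (by decide) (by decide) (by decide)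
  have hqs : x23 * x14 - x13 * x24 ∈ supported ℚ ({3, 1} : Set (Fin 8))ᶜ := by
    refine sub_mem (mul_mem ?_ ?_) (mul_mem ?_ ?_) <;> exact X_mem_supported.mpr (by decide)
  have hQ3 : Q3 = Ideal.span (X '' {3, 1}) ⊔ Ideal.span {x23 * x14 - x13 * x24} := by
    rw [Set.image_pair, ← Ideal.span_union, Set.insert_union, Set.singleton_union]
    rfl
  rw [hQ3]
  exact isPrime_span_X_image_sup_span_singleton_s3 hq hqs
end
end

section
/- In the polynomial ring R = ℚ[x11, x22, x21, x12, x23, x13, x14, x24], the ideal I generated by x11*x22 − x21*x12, x12*x23 − x22*x13, and x13*x24 − x23*x14 is a radical ideal (i.e., I equals its own radical). -/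
open MvPolynomial

noncomputable section

/-! ### Auxiliary development

We think of the variables as a 2×4 matrix with rows `x1j` ("a" row) and `x2j` ("b" row).
`mon p1 p2 p3 p4 q1 q2 q3 q4 = a1^p1 a2^p2 a3^p3 a4^p4 b1^q1 b2^q2 b3^q3 b4^q4`. -/

def mon (p1 p2 p3 p4 q1 q2 q3 q4 : ℕ) : R :=
  x11^p1 * x12^p2 * x13^p3 * x14^p4 * x21^q1 * x22^q2 * x23^q3 * x24^q4

lemma mem_gen1 : x11 * x22 - x21 * x12 ∈ I := Ideal.subset_span (by simp)
lemma mem_gen2 : x12 * x23 - x22 * x13 ∈ I := Ideal.subset_span (by simp)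
lemma mem_gen3 : x13 * x24 - x23 * x14 ∈ I := Ideal.subset_span (by simp)

lemma moveA (p1 p2 p3 p4 q1 q2 q3 q4 : ℕ) :
    mon (p1+1) p2 p3 p4 q1 (q2+1) q3 q4 - mon p1 (p2+1) p3 p4 (q1+1) q2 q3 q4 ∈ I := by
  have h : mon (p1+1) p2 p3 p4 q1 (q2+1) q3 q4 - mon p1 (p2+1) p3 p4 (q1+1) q2 q3 q4
      = mon p1 p2 p3 p4 q1 q2 q3 q4 * (x11 * x22 - x21 * x12) := by
    unfold mon; ring
  rw [h]; exact I.mul_mem_left _ mem_gen1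

lemma moveB (p1 p2 p3 p4 q1 q2 q3 q4 : ℕ) :
    mon p1 (p2+1) p3 p4 q1 q2 (q3+1) q4 - mon p1 p2 (p3+1) p4 q1 (q2+1) q3 q4 ∈ I := by
  have h : mon p1 (p2+1) p3 p4 q1 q2 (q3+1) q4 - mon p1 p2 (p3+1) p4 q1 (q2+1) q3 q4
      = mon p1 p2 p3 p4 q1 q2 q3 q4 * (x12 * x23 - x22 * x13) := by
    unfold mon; ring
  rw [h]; exact I.mul_mem_left _ mem_gen2

lemma moveC (p1 p2 p3 p4 q1 q2 q3 q4 : ℕ) :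
    mon p1 p2 (p3+1) p4 q1 q2 q3 (q4+1) - mon p1 p2 p3 (p4+1) q1 q2 (q3+1) q4 ∈ I := by
  have h : mon p1 p2 (p3+1) p4 q1 q2 q3 (q4+1) - mon p1 p2 p3 (p4+1) q1 q2 (q3+1) q4
      = mon p1 p2 p3 p4 q1 q2 q3 q4 * (x13 * x24 - x23 * x14) := by
    unfold mon; ring
  rw [h]; exact I.mul_mem_left _ mem_gen3

/-- Canonical-form predicate on exponent tuples. -/
def CanonT (p1 p2 p3 p4 q1 q2 q3 q4 : ℕ) : Prop :=
  ((p3 = 0 ∧ q3 = 0) → (q2 = 0 ∨ p1 = 0))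
  ∧ ((p3 + q3 > 0 ∧ p2 = 0 ∧ q2 = 0) → (q4 = 0 ∨ p3 = 0))
  ∧ ((p3 + q3 > 0 ∧ p2 + q2 > 0) →
      ((q2 = 0 ∨ p1 = 0) ∧ (q3 = 0 ∨ p2 = 0) ∧ (q4 = 0 ∨ p3 = 0)))

lemma reduce (μ : ℕ) : ∀ p1 p2 p3 p4 q1 q2 q3 q4 : ℕ, q2 + 2*q3 + 3*q4 ≤ μ →
    ∃ P1 P2 P3 P4 Q1 Q2 Q3 Q4 : ℕ, CanonT P1 P2 P3 P4 Q1 Q2 Q3 Q4 ∧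
      mon p1 p2 p3 p4 q1 q2 q3 q4 - mon P1 P2 P3 P4 Q1 Q2 Q3 Q4 ∈ I := by
  induction μ with
  | zero =>
    intro p1 p2 p3 p4 q1 q2 q3 q4 h
    exact ⟨p1, p2, p3, p4, q1, q2, q3, q4, by unfold CanonT; omega, by simp⟩
  | succ n IH =>
    intro p1 p2 p3 p4 q1 q2 q3 q4 h
    by_cases hc : CanonT p1 p2 p3 p4 q1 q2 q3 q4
    · exact ⟨p1, p2, p3, p4, q1, q2, q3, q4, hc, by simp⟩
    · have hmove : (q2 ≥ 1 ∧ p1 ≥ 1) ∨ (q3 ≥ 1 ∧ p2 ≥ 1) ∨ (q4 ≥ 1 ∧ p3 ≥ 1) := by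
        unfold CanonT at hc; omega
      rcases hmove with ⟨h1, h2⟩ | ⟨h1, h2⟩ | ⟨h1, h2⟩
      · obtain ⟨q2', rfl⟩ : ∃ k, q2 = k + 1 := ⟨q2 - 1, by omega⟩
        obtain ⟨p1', rfl⟩ : ∃ k, p1 = k + 1 := ⟨p1 - 1, by omega⟩
        obtain ⟨P1, P2, P3, P4, Q1, Q2, Q3, Q4, hC, hm⟩ :=
          IH p1' (p2+1) p3 p4 (q1+1) q2' q3 q4 (by omega)
        refine ⟨P1, P2, P3, P4, Q1, Q2, Q3, Q4, hC, ?_⟩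
        have := I.add_mem (moveA p1' p2 p3 p4 q1 q2' q3 q4) hm
        rwa [sub_add_sub_cancel] at this
      · obtain ⟨q3', rfl⟩ : ∃ k, q3 = k + 1 := ⟨q3 - 1, by omega⟩
        obtain ⟨p2', rfl⟩ : ∃ k, p2 = k + 1 := ⟨p2 - 1, by omega⟩
        obtain ⟨P1, P2, P3, P4, Q1, Q2, Q3, Q4, hC, hm⟩ :=
          IH p1 p2' (p3+1) p4 q1 (q2+1) q3' q4 (by omega)
        refine ⟨P1, P2, P3, P4, Q1, Q2, Q3, Q4, hC, ?_⟩
        have := I.add_mem (moveB p1 p2' p3 p4 q1 q2 q3' q4) hm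
        rwa [sub_add_sub_cancel] at this
      · obtain ⟨q4', rfl⟩ : ∃ k, q4 = k + 1 := ⟨q4 - 1, by omega⟩
        obtain ⟨p3', rfl⟩ : ∃ k, p3 = k + 1 := ⟨p3 - 1, by omega⟩
        obtain ⟨P1, P2, P3, P4, Q1, Q2, Q3, Q4, hC, hm⟩ :=
          IH p1 p2 p3' (p4+1) q1 q2 (q3+1) q4' (by omega)
        refine ⟨P1, P2, P3, P4, Q1, Q2, Q3, Q4, hC, ?_⟩
        have := I.add_mem (moveC p1 p2 p3' p4 q1 q2 q3 q4') hm
        rwa [sub_add_sub_cancel] at this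

/-! ### Three algebra endomorphisms whose common kernel is `I` -/

def sv : Fin 8 → R := ![x11, x21*x12, x21*x11, x12, x21*x13, x13, x14, x21*x14]
def t2v : Fin 8 → R := ![x11, x21*x12, x21*x11, x12, 0, 0, x14, x24]
def t3v : Fin 8 → R := ![x11, 0, x21, 0, x23*x13, x13, x14, x23*x14]

def sg : R →ₐ[ℚ] R := aeval sv
def t2 : R →ₐ[ℚ] R := aeval t2v
def t3 : R →ₐ[ℚ] R := aeval t3v

lemma sg_x11 : sg x11 = x11 := by simp only [sg, x11, aeval_X]; rfl
lemma sg_x22 : sg x22 = x21*x12 := by simp only [sg, x22, aeval_X]; rfl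
lemma sg_x21 : sg x21 = x21*x11 := by simp only [sg, x21, aeval_X]; rfl
lemma sg_x12 : sg x12 = x12 := by simp only [sg, x12, aeval_X]; rfl
lemma sg_x23 : sg x23 = x21*x13 := by simp only [sg, x23, aeval_X]; rfl
lemma sg_x13 : sg x13 = x13 := by simp only [sg, x13, aeval_X]; rfl
lemma sg_x14 : sg x14 = x14 := by simp only [sg, x14, aeval_X]; rfl
lemma sg_x24 : sg x24 = x21*x14 := by simp only [sg, x24, aeval_X]; rfl

lemma t2_x11 : t2 x11 = x11 := by simp only [t2, x11, aeval_X]; rfl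
lemma t2_x22 : t2 x22 = x21*x12 := by simp only [t2, x22, aeval_X]; rfl
lemma t2_x21 : t2 x21 = x21*x11 := by simp only [t2, x21, aeval_X]; rfl
lemma t2_x12 : t2 x12 = x12 := by simp only [t2, x12, aeval_X]; rfl
lemma t2_x23 : t2 x23 = 0 := by simp only [t2, x23, aeval_X]; rfl
lemma t2_x13 : t2 x13 = 0 := by simp only [t2, x13, aeval_X]; rfl
lemma t2_x14 : t2 x14 = x14 := by simp only [t2, x14, aeval_X]; rfl
lemma t2_x24 : t2 x24 = x24 := by simp only [t2, x24, aeval_X]; rfl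

lemma t3_x11 : t3 x11 = x11 := by simp only [t3, x11, aeval_X]; rfl
lemma t3_x22 : t3 x22 = 0 := by simp only [t3, x22, aeval_X]; rfl
lemma t3_x21 : t3 x21 = x21 := by simp only [t3, x21, aeval_X]; rfl
lemma t3_x12 : t3 x12 = 0 := by simp only [t3, x12, aeval_X]; rfl
lemma t3_x23 : t3 x23 = x23*x13 := by simp only [t3, x23, aeval_X]; rfl
lemma t3_x13 : t3 x13 = x13 := by simp only [t3, x13, aeval_X]; rfl
lemma t3_x14 : t3 x14 = x14 := by simp only [t3, x14, aeval_X]; rfl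
lemma t3_x24 : t3 x24 = x23*x14 := by simp only [t3, x24, aeval_X]; rfl

lemma sg_mon (p1 p2 p3 p4 q1 q2 q3 q4 : ℕ) :
    sg (mon p1 p2 p3 p4 q1 q2 q3 q4)
      = mon (p1+q1) (p2+q2) (p3+q3) (p4+q4) (q1+q2+q3+q4) 0 0 0 := by
  simp only [mon, map_mul, map_pow, sg_x11, sg_x12, sg_x13, sg_x14, sg_x21, sg_x22,
    sg_x23, sg_x24]
  ring

lemma t2_mon (p1 p2 p4 q1 q2 q4 : ℕ) :
    t2 (mon p1 p2 0 p4 q1 q2 0 q4) = mon (p1+q1) (p2+q2) 0 p4 (q1+q2) 0 0 q4 := by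
  simp only [mon, map_mul, map_pow, t2_x11, t2_x12, t2_x13, t2_x14, t2_x21, t2_x22,
    t2_x23, t2_x24]
  ring

lemma t3_mon (p1 p3 p4 q1 q3 q4 : ℕ) :
    t3 (mon p1 0 p3 p4 q1 0 q3 q4) = mon p1 0 (p3+q3) (p4+q4) q1 0 (q3+q4) 0 := by
  simp only [mon, map_mul, map_pow, t3_x11, t3_x12, t3_x13, t3_x14, t3_x21, t3_x22,
    t3_x23, t3_x24]
  ring

lemma t2_mon_zero (p1 p2 p3 p4 q1 q2 q3 q4 : ℕ) (h : p3 + q3 ≠ 0) :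
    t2 (mon p1 p2 p3 p4 q1 q2 q3 q4) = 0 := by
  obtain h3 | h3 : p3 ≠ 0 ∨ q3 ≠ 0 := by omega
  · simp [mon, map_mul, map_pow, t2_x13, zero_pow h3]
  · simp [mon, map_mul, map_pow, t2_x23, zero_pow h3]

lemma t3_mon_zero (p1 p2 p3 p4 q1 q2 q3 q4 : ℕ) (h : p2 + q2 ≠ 0) :
    t3 (mon p1 p2 p3 p4 q1 q2 q3 q4) = 0 := by
  obtain h3 | h3 : p2 ≠ 0 ∨ q2 ≠ 0 := by omega
  · simp [mon, map_mul, map_pow, t3_x12, zero_pow h3]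
  · simp [mon, map_mul, map_pow, t3_x22, zero_pow h3]

lemma sg_I {f : R} (hf : f ∈ I) : sg f = 0 := by
  have hle : I ≤ RingHom.ker (sg : R →ₐ[ℚ] R).toRingHom := by
    rw [I, Ideal.span_le]
    rintro g (rfl | rfl | rfl) <;>
      · simp only [SetLike.mem_coe, RingHom.mem_ker, AlgHom.toRingHom_eq_coe,
          RingHom.coe_coe, map_sub, map_mul, sg_x11, sg_x12, sg_x13, sg_x14, sg_x21,
          sg_x22, sg_x23, sg_x24]
        ring
  exact hle hf

lemma t2_I {f : R} (hf : f ∈ I) : t2 f = 0 := by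
  have hle : I ≤ RingHom.ker (t2 : R →ₐ[ℚ] R).toRingHom := by
    rw [I, Ideal.span_le]
    rintro g (rfl | rfl | rfl) <;>
      · simp only [SetLike.mem_coe, RingHom.mem_ker, AlgHom.toRingHom_eq_coe,
          RingHom.coe_coe, map_sub, map_mul, t2_x11, t2_x12, t2_x13, t2_x14, t2_x21,
          t2_x22, t2_x23, t2_x24]
        ring
  exact hle hf

lemma t3_I {f : R} (hf : f ∈ I) : t3 f = 0 := by
  have hle : I ≤ RingHom.ker (t3 : R →ₐ[ℚ] R).toRingHom := by
    rw [I, Ideal.span_le]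
    rintro g (rfl | rfl | rfl) <;>
      · simp only [SetLike.mem_coe, RingHom.mem_ker, AlgHom.toRingHom_eq_coe,
          RingHom.coe_coe, map_sub, map_mul, t3_x11, t3_x12, t3_x13, t3_x14, t3_x21,
          t3_x22, t3_x23, t3_x24]
        ring
  exact hle hf

/-! ### Exponent bookkeeping -/

def expv (p1 p2 p3 p4 q1 q2 q3 q4 : ℕ) : Fin 8 →₀ ℕ :=
  Finsupp.equivFunOnFinite.symm ![p1, q2, q1, p2, q3, p3, p4, q4]

lemma expv0 (p1 p2 p3 p4 q1 q2 q3 q4 : ℕ) : expv p1 p2 p3 p4 q1 q2 q3 q4 0 = p1 := rfl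
lemma expv1 (p1 p2 p3 p4 q1 q2 q3 q4 : ℕ) : expv p1 p2 p3 p4 q1 q2 q3 q4 1 = q2 := rfl
lemma expv2 (p1 p2 p3 p4 q1 q2 q3 q4 : ℕ) : expv p1 p2 p3 p4 q1 q2 q3 q4 2 = q1 := rfl
lemma expv3 (p1 p2 p3 p4 q1 q2 q3 q4 : ℕ) : expv p1 p2 p3 p4 q1 q2 q3 q4 3 = p2 := rfl
lemma expv4 (p1 p2 p3 p4 q1 q2 q3 q4 : ℕ) : expv p1 p2 p3 p4 q1 q2 q3 q4 4 = q3 := rfl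
lemma expv5 (p1 p2 p3 p4 q1 q2 q3 q4 : ℕ) : expv p1 p2 p3 p4 q1 q2 q3 q4 5 = p3 := rfl
lemma expv6 (p1 p2 p3 p4 q1 q2 q3 q4 : ℕ) : expv p1 p2 p3 p4 q1 q2 q3 q4 6 = p4 := rfl
lemma expv7 (p1 p2 p3 p4 q1 q2 q3 q4 : ℕ) : expv p1 p2 p3 p4 q1 q2 q3 q4 7 = q4 := rfl

lemma mon_eq_monomial (p1 p2 p3 p4 q1 q2 q3 q4 : ℕ) :
    mon p1 p2 p3 p4 q1 q2 q3 q4 = monomial (expv p1 p2 p3 p4 q1 q2 q3 q4) 1 := by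
  rw [monomial_eq, Finsupp.prod_fintype _ _ (fun i => pow_zero _), Fin.prod_univ_eight]
  simp only [expv0, expv1, expv2, expv3, expv4, expv5, expv6, expv7, map_one, one_mul]
  unfold mon x11 x22 x21 x12 x23 x13 x14 x24
  ring

lemma eq_expv (m : Fin 8 →₀ ℕ) :
    expv (m 0) (m 3) (m 5) (m 6) (m 2) (m 1) (m 4) (m 7) = m := by
  apply Finsupp.ext
  intro i
  fin_cases i <;> rfl

lemma monomial_as_mon (m : Fin 8 →₀ ℕ) (c : ℚ) :
    monomial m c = C c * mon (m 0) (m 3) (m 5) (m 6) (m 2) (m 1) (m 4) (m 7) := by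
  rw [mon_eq_monomial, C_mul_monomial, mul_one, eq_expv]

def Canon (m : Fin 8 →₀ ℕ) : Prop :=
  CanonT (m 0) (m 3) (m 5) (m 6) (m 2) (m 1) (m 4) (m 7)

def E2 (m : Fin 8 →₀ ℕ) : Fin 8 →₀ ℕ :=
  expv (m 0 + m 2) (m 3 + m 1) 0 (m 6) (m 2 + m 1) 0 0 (m 7)

def E3 (m : Fin 8 →₀ ℕ) : Fin 8 →₀ ℕ :=
  expv (m 0) 0 (m 5 + m 4) (m 6 + m 7) (m 2) 0 (m 4 + m 7) 0

def Es (m : Fin 8 →₀ ℕ) : Fin 8 →₀ ℕ :=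
  expv (m 0 + m 2) (m 3 + m 1) (m 5 + m 4) (m 6 + m 7) (m 2 + m 1 + m 4 + m 7) 0 0 0

lemma C_eq_algebraMap' (c : ℚ) : (C c : R) = algebraMap ℚ R c := rfl

lemma sg_monomial (m : Fin 8 →₀ ℕ) (c : ℚ) :
    sg (monomial m c) = monomial (Es m) c := by
  rw [monomial_as_mon m c, map_mul, sg_mon, monomial_as_mon (Es m) c]
  congr 1
  rw [C_eq_algebraMap']
  exact sg.commutes c

lemma t2_monomial (m : Fin 8 →₀ ℕ) (c : ℚ) (h4 : m 4 = 0) (h5 : m 5 = 0) :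
    t2 (monomial m c) = monomial (E2 m) c := by
  rw [monomial_as_mon m c, h4, h5, map_mul, t2_mon, monomial_as_mon (E2 m) c]
  congr 1
  rw [C_eq_algebraMap']
  exact t2.commutes c

lemma t3_monomial (m : Fin 8 →₀ ℕ) (c : ℚ) (h1 : m 1 = 0) (h3 : m 3 = 0) :
    t3 (monomial m c) = monomial (E3 m) c := by
  rw [monomial_as_mon m c, h1, h3, map_mul, t3_mon, monomial_as_mon (E3 m) c]
  congr 1
  rw [C_eq_algebraMap']
  exact t3.commutes c

lemma t2_monomial_zero (m : Fin 8 →₀ ℕ) (c : ℚ) (h : ¬ (m 4 = 0 ∧ m 5 = 0)) :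
    t2 (monomial m c) = 0 := by
  rw [monomial_as_mon m c, map_mul, t2_mon_zero _ _ _ _ _ _ _ _ (by omega), mul_zero]

lemma t3_monomial_zero (m : Fin 8 →₀ ℕ) (c : ℚ) (h : ¬ (m 1 = 0 ∧ m 3 = 0)) :
    t3 (monomial m c) = 0 := by
  rw [monomial_as_mon m c, map_mul, t3_mon_zero _ _ _ _ _ _ _ _ (by omega), mul_zero]

/-! ### Injectivity of the exponent maps on canonical monomials -/

lemma inj2 (m m' : Fin 8 →₀ ℕ) (hm : Canon m) (hm' : Canon m')
    (h45 : m 4 = 0 ∧ m 5 = 0) (h45' : m' 4 = 0 ∧ m' 5 = 0)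
    (h : E2 m = E2 m') : m = m' := by
  have e0 : m 0 + m 2 = m' 0 + m' 2 := DFunLike.congr_fun h 0
  have e2 : m 2 + m 1 = m' 2 + m' 1 := DFunLike.congr_fun h 2
  have e3 : m 3 + m 1 = m' 3 + m' 1 := DFunLike.congr_fun h 3
  have e6 : m 6 = m' 6 := DFunLike.congr_fun h 6
  have e7 : m 7 = m' 7 := DFunLike.congr_fun h 7
  unfold Canon CanonT at hm hm'
  rw [← eq_expv m, ← eq_expv m']
  have g0 : m 0 = m' 0 := by omega
  have g1 : m 1 = m' 1 := by omega
  have g2 : m 2 = m' 2 := by omega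
  have g3 : m 3 = m' 3 := by omega
  have g4 : m 4 = m' 4 := by omega
  have g5 : m 5 = m' 5 := by omega
  rw [g0, g1, g2, g3, g4, g5, e6, e7]

lemma inj3 (m m' : Fin 8 →₀ ℕ) (hm : Canon m) (hm' : Canon m')
    (hd3 : m 4 + m 5 ≠ 0) (hd3' : m' 4 + m' 5 ≠ 0)
    (h13 : m 1 = 0 ∧ m 3 = 0) (h13' : m' 1 = 0 ∧ m' 3 = 0)
    (h : E3 m = E3 m') : m = m' := by
  have e0 : m 0 = m' 0 := DFunLike.congr_fun h 0
  have e2 : m 2 = m' 2 := DFunLike.congr_fun h 2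
  have e5 : m 5 + m 4 = m' 5 + m' 4 := DFunLike.congr_fun h 5
  have e4 : m 4 + m 7 = m' 4 + m' 7 := DFunLike.congr_fun h 4
  have e6 : m 6 + m 7 = m' 6 + m' 7 := DFunLike.congr_fun h 6
  unfold Canon CanonT at hm hm'
  rw [← eq_expv m, ← eq_expv m']
  have g4 : m 4 = m' 4 := by omega
  have g5 : m 5 = m' 5 := by omega
  have g6 : m 6 = m' 6 := by omega
  have g7 : m 7 = m' 7 := by omega
  rw [e0, h13.1, h13'.1, h13.2, h13'.2, e2, g4, g5, g6, g7]

lemma injs (m m' : Fin 8 →₀ ℕ) (hm : Canon m) (hm' : Canon m')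
    (hd3 : m 4 + m 5 ≠ 0) (hd3' : m' 4 + m' 5 ≠ 0)
    (hd2 : m 1 + m 3 ≠ 0) (hd2' : m' 1 + m' 3 ≠ 0)
    (h : Es m = Es m') : m = m' := by
  have e0 : m 0 + m 2 = m' 0 + m' 2 := DFunLike.congr_fun h 0
  have e3 : m 3 + m 1 = m' 3 + m' 1 := DFunLike.congr_fun h 3
  have e5 : m 5 + m 4 = m' 5 + m' 4 := DFunLike.congr_fun h 5
  have e6 : m 6 + m 7 = m' 6 + m' 7 := DFunLike.congr_fun h 6
  have e2 : m 2 + m 1 + m 4 + m 7 = m' 2 + m' 1 + m' 4 + m' 7 :=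
    DFunLike.congr_fun h 2
  unfold Canon CanonT at hm hm'
  rw [← eq_expv m, ← eq_expv m']
  have g0 : m 0 = m' 0 := by omega
  have g1 : m 1 = m' 1 := by omega
  have g2 : m 2 = m' 2 := by omega
  have g3 : m 3 = m' 3 := by omega
  have g4 : m 4 = m' 4 := by omega
  have g5 : m 5 = m' 5 := by omega
  have g6 : m 6 = m' 6 := by omega
  have g7 : m 7 = m' 7 := by omega
  rw [g0, g1, g2, g3, g4, g5, g6, g7]

/-! ### Linear independence extraction -/

lemma coeff_elim {S : Finset (Fin 8 →₀ ℕ)} {c : (Fin 8 →₀ ℕ) → ℚ}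
    {E : (Fin 8 →₀ ℕ) → (Fin 8 →₀ ℕ)}
    (hinj : ∀ m ∈ S, ∀ m' ∈ S, E m = E m' → m = m')
    (h : ∑ m ∈ S, (monomial (E m) (c m) : R) = 0) : ∀ m ∈ S, c m = 0 := by
  intro m hm
  have h2 := congrArg (coeff (E m)) h
  rw [coeff_sum] at h2
  simp only [coeff_monomial, coeff_zero] at h2
  rw [Finset.sum_eq_single_of_mem m hm] at h2
  · rwa [if_pos rfl] at h2
  · intro b hb hne
    exact if_neg (fun he => hne (hinj b hb m hm he))

lemma canon_reduce (m : Fin 8 →₀ ℕ) :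
    ∃ m', Canon m' ∧ (monomial m 1 : R) - monomial m' 1 ∈ I := by
  obtain ⟨P1, P2, P3, P4, Q1, Q2, Q3, Q4, hC, hmem⟩ :=
    reduce (m 1 + 2 * m 4 + 3 * m 7) (m 0) (m 3) (m 5) (m 6) (m 2) (m 1) (m 4) (m 7)
      le_rfl
  refine ⟨expv P1 P2 P3 P4 Q1 Q2 Q3 Q4, ?_, ?_⟩
  · unfold Canon
    rw [expv0, expv1, expv2, expv3, expv4, expv5, expv6, expv7]
    exact hC
  · have e1 : (monomial m 1 : R) = mon (m 0) (m 3) (m 5) (m 6) (m 2) (m 1) (m 4) (m 7) := by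
      rw [monomial_as_mon]; simp
    rw [e1, ← mon_eq_monomial]
    exact hmem

/-! ### The key lemma -/

lemma key (f : R) (h1 : sg f = 0) (h2 : t2 f = 0) (h3 : t3 f = 0) : f ∈ I := by
  choose ν hν1 hν2 using canon_reduce
  set g : R := ∑ m ∈ f.support, monomial (ν m) (coeff m f) with hg
  have hfg : f - g ∈ I := by
    nth_rewrite 1 [← support_sum_monomial_coeff f]
    rw [hg, ← Finset.sum_sub_distrib]
    refine Ideal.sum_mem I fun m _ => ?_
    have e : (monomial m (coeff m f) : R) - monomial (ν m) (coeff m f)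
        = C (coeff m f) * ((monomial m 1 : R) - monomial (ν m) 1) := by
      rw [mul_sub, C_mul_monomial, C_mul_monomial, mul_one]
    rw [e]
    exact I.mul_mem_left _ (hν2 m)
  have hCsupp : ∀ m ∈ g.support, Canon m := by
    intro m hm
    have hc := MvPolynomial.mem_support_iff.mp hm
    by_contra hnc
    apply hc
    rw [hg, coeff_sum]
    refine Finset.sum_eq_zero fun m₀ _ => ?_
    rw [coeff_monomial, if_neg]
    intro he
    exact hnc (he ▸ hν1 m₀)
  have hsg : sg g = 0 := by
    have := sg_I hfg
    rw [map_sub, h1, zero_sub, neg_eq_zero] at this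
    exact this
  have ht2 : t2 g = 0 := by
    have := t2_I hfg
    rw [map_sub, h2, zero_sub, neg_eq_zero] at this
    exact this
  have ht3 : t3 g = 0 := by
    have := t3_I hfg
    rw [map_sub, h3, zero_sub, neg_eq_zero] at this
    exact this
  -- Step 1 : no monomial of g has (m 4 = 0 ∧ m 5 = 0)
  have step1 : ∀ m ∈ g.support, ¬ (m 4 = 0 ∧ m 5 = 0) := by
    have hsum : ∑ m ∈ g.support.filter (fun m => m 4 = 0 ∧ m 5 = 0),
        (monomial (E2 m) (coeff m g) : R) = 0 := by
      have e : t2 g = ∑ m ∈ g.support.filter (fun m => m 4 = 0 ∧ m 5 = 0),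
          (monomial (E2 m) (coeff m g) : R) := by
        nth_rewrite 1 [← support_sum_monomial_coeff g]
        rw [map_sum, ← Finset.sum_filter_add_sum_filter_not g.support
          (fun m => m 4 = 0 ∧ m 5 = 0)]
        rw [Finset.sum_congr rfl (fun m hm => t2_monomial m (coeff m g)
          (Finset.mem_filter.mp hm).2.1 (Finset.mem_filter.mp hm).2.2),
          Finset.sum_congr rfl (fun m hm => t2_monomial_zero m (coeff m g)
          (Finset.mem_filter.mp hm).2), Finset.sum_const_zero, add_zero]
      rw [← e, ht2]
    have hz := coeff_elim (fun m hm m' hm' he =>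
      inj2 m m' (hCsupp m (Finset.mem_filter.mp hm).1) (hCsupp m' (Finset.mem_filter.mp hm').1)
        (Finset.mem_filter.mp hm).2 (Finset.mem_filter.mp hm').2 he) hsum
    intro m hm hcon
    have : coeff m g = 0 := hz m (Finset.mem_filter.mpr ⟨hm, hcon⟩)
    exact (MvPolynomial.mem_support_iff.mp hm) this
  -- Step 2 : no monomial of g has (m 1 = 0 ∧ m 3 = 0)
  have step2 : ∀ m ∈ g.support, ¬ (m 1 = 0 ∧ m 3 = 0) := by
    have hsum : ∑ m ∈ g.support.filter (fun m => m 1 = 0 ∧ m 3 = 0),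
        (monomial (E3 m) (coeff m g) : R) = 0 := by
      have e : t3 g = ∑ m ∈ g.support.filter (fun m => m 1 = 0 ∧ m 3 = 0),
          (monomial (E3 m) (coeff m g) : R) := by
        nth_rewrite 1 [← support_sum_monomial_coeff g]
        rw [map_sum, ← Finset.sum_filter_add_sum_filter_not g.support
          (fun m => m 1 = 0 ∧ m 3 = 0)]
        rw [Finset.sum_congr rfl (fun m hm => t3_monomial m (coeff m g)
          (Finset.mem_filter.mp hm).2.1 (Finset.mem_filter.mp hm).2.2),
          Finset.sum_congr rfl (fun m hm => t3_monomial_zero m (coeff m g)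
          (Finset.mem_filter.mp hm).2), Finset.sum_const_zero, add_zero]
      rw [← e, ht3]
    have hz := coeff_elim (fun m hm m' hm' he =>
      inj3 m m' (hCsupp m (Finset.mem_filter.mp hm).1) (hCsupp m' (Finset.mem_filter.mp hm').1)
        (by have := step1 m (Finset.mem_filter.mp hm).1; omega)
        (by have := step1 m' (Finset.mem_filter.mp hm').1; omega)
        (Finset.mem_filter.mp hm).2 (Finset.mem_filter.mp hm').2 he) hsum
    intro m hm hcon
    have : coeff m g = 0 := hz m (Finset.mem_filter.mpr ⟨hm, hcon⟩)
    exact (MvPolynomial.mem_support_iff.mp hm) this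
  -- Step 3 : g = 0
  have hg0 : g = 0 := by
    have hsum : ∑ m ∈ g.support, (monomial (Es m) (coeff m g) : R) = 0 := by
      have e : sg g = ∑ m ∈ g.support, (monomial (Es m) (coeff m g) : R) := by
        nth_rewrite 1 [← support_sum_monomial_coeff g]
        rw [map_sum]
        exact Finset.sum_congr rfl fun m _ => sg_monomial m (coeff m g)
      rw [← e, hsg]
    have hz := coeff_elim (fun m hm m' hm' he =>
      injs m m' (hCsupp m hm) (hCsupp m' hm')
        (by have := step1 m hm; omega) (by have := step1 m' hm'; omega)
        (by have := step2 m hm; omega) (by have := step2 m' hm'; omega) he) hsum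
    ext m
    by_cases hm : m ∈ g.support
    · rw [hz m hm]; simp
    · rw [MvPolynomial.notMem_support_iff.mp hm]; simp
  have hgI : g ∈ I := by rw [hg0]; exact I.zero_mem
  have hsum := I.add_mem hfg hgI
  rwa [sub_add_cancel] at hsum

theorem I_isRadical : I.radical = I := by
  refine le_antisymm ?_ Ideal.le_radical
  intro f hf
  obtain ⟨n, hn⟩ := Ideal.mem_radical_iff.mp hf
  rcases Nat.eq_zero_or_pos n with rfl | hpos
  · rw [pow_zero] at hn
    have htop : I = ⊤ := (Ideal.eq_top_iff_one I).mpr hn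
    rw [htop]; exact Submodule.mem_top
  · apply key
    · have : (sg f) ^ n = 0 := by rw [← map_pow, sg_I hn]
      exact pow_eq_zero_iff (by omega) |>.mp this
    · have : (t2 f) ^ n = 0 := by rw [← map_pow, t2_I hn]
      exact pow_eq_zero_iff (by omega) |>.mp this
    · have : (t3 f) ^ n = 0 := by rw [← map_pow, t3_I hn]
      exact pow_eq_zero_iff (by omega) |>.mp this

end
end

section
/- Let R = ℚ[x11, x22, x21, x12, x23, x13, x14, x24] and let I be the ideal generated by x11*x22 − x21*x12, x12*x23 − x22*x13, and x13*x24 − x23*x14. Then the Krull dimension of the quotient ring R/I equals 5. -/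
open MvPolynomial

noncomputable section

/-!
If `p₀ < ⋯ < pₙ` are primes of a `k`-algebra `B` and `xᵢ ∈ pᵢ₊₁ \ pᵢ`, then the images of
`x₀, …, xₙ₋₁` in `B ⧸ p₀` are algebraically independent (a relation, read modulo `p₁`, would have
to be divisible by `x₀`). Hence `dim (R ⧸ I) ≤ 5` as soon as every domain `A` generated by a
`2 × 4` matrix with vanishing adjacent minors has transcendence degree at most 5. If an entry `v`
of the middle columns is nonzero, the minors express `v` times each entry through five of the
entries, so `A` is algebraic over the algebra they generate; if the middle columns vanish, the
four outer entries generate `A`.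

For the lower bound, the component `x13 = x23 = 0, x11 x22 = x21 x12` of `I` is parametrised by
six variables; setting five of them to zero one after another gives six primes containing `I`.
-/

open Algebra Set

theorem transcendental_of_map_eq_zero {S A A' : Type*} [CommRing S] [CommRing A] [IsDomain A]
    [CommRing A'] [Algebra S A] (φ : A →+* A') (hφ : Function.Injective (φ.comp (algebraMap S A)))
    {x : A} (hx0 : x ≠ 0) (hx : φ x = 0) : Transcendental S x := by
  rintro ⟨F, hF, hFx⟩
  obtain ⟨G, hFG, hXG⟩ := F.exists_eq_pow_rootMultiplicity_mul_and_not_dvd hF 0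
  rw [map_zero, sub_zero] at hFG hXG
  have hG : Polynomial.aeval x G = 0 := by
    rw [hFG, map_mul, map_pow, Polynomial.aeval_X] at hFx
    exact (mul_eq_zero.1 hFx).resolve_left (pow_ne_zero _ hx0)
  refine hXG (Polynomial.X_dvd_iff.2 (hφ ?_))
  rw [← G.divX_mul_X_add, map_add, map_mul, Polynomial.aeval_X, Polynomial.aeval_C] at hG
  simpa [hx] using congrArg φ hG

section ChainsOfPrimes

variable {k B : Type*} [Field k] [CommRing B] [Algebra k B]

theorem algebraicIndependent_option_of_mem_of_notMem {p q : Ideal B} [p.IsPrime] (hpq : p ≤ q)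
    {x : B} (hxq : x ∈ q) (hxp : x ∉ p) {ι : Type*} {y : ι → B}
    (hy : AlgebraicIndependent k (Ideal.Quotient.mk q ∘ y)) :
    AlgebraicIndependent k (Ideal.Quotient.mk p ∘ fun o : Option ι ↦ o.elim x y) := by
  set φ := Ideal.Quotient.factorₐ k hpq
  have hyp : AlgebraicIndependent k (Ideal.Quotient.mk p ∘ y) := hy.of_comp φ
  have hcomp : (Ideal.Quotient.mk p ∘ fun o : Option ι ↦ o.elim x y) =
      fun o ↦ o.elim (Ideal.Quotient.mk p x) (Ideal.Quotient.mk p ∘ y) := by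
    ext (_ | _) <;> rfl
  rw [hcomp]
  refine (hyp.option_iff_transcendental _).2 (transcendental_of_map_eq_zero φ.toRingHom ?_ ?_ ?_)
  · rw [RingHom.coe_comp, ← Function.Injective.of_comp_iff' _ hyp.aevalEquiv.bijective]
    convert hy using 1
    rw [AlgebraicIndependent]
    congr!
    ext P
    exact comp_aeval_apply _ φ P
  · exact Ideal.Quotient.eq_zero_iff_mem.not.2 hxp
  · exact Ideal.Quotient.eq_zero_iff_mem.2 hxq

theorem exists_algebraicIndependent_of_ltSeries (l : LTSeries (PrimeSpectrum B)) :
    ∃ (ι : Type) (_ : Fintype ι) (y : ι → B), Fintype.card ι = l.length ∧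
      AlgebraicIndependent k (Ideal.Quotient.mk l.head.asIdeal ∘ y) := by
  induction l using RelSeries.inductionOn with
  | singleton p => exact ⟨Empty, inferInstance, Empty.elim, rfl, algebraicIndependent_empty_type⟩
  | cons l p hp ih =>
    obtain ⟨ι, _, y, hcard, hy⟩ := ih
    have hp : p.asIdeal < l.head.asIdeal := hp
    obtain ⟨x, hxq, hxp⟩ := SetLike.exists_of_lt hp
    exact ⟨Option ι, inferInstance, fun o ↦ o.elim x y, by simp [hcard],
      algebraicIndependent_option_of_mem_of_notMem hp.le hxq hxp hy⟩

theorem ringKrullDim_le_of_trdeg_quotient_le (n : ℕ)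
    (h : ∀ p : Ideal B, p.IsPrime → trdeg k (B ⧸ p) ≤ n) : ringKrullDim B ≤ n := by
  refine iSup_le fun l ↦ ?_
  obtain ⟨ι, _, y, hcard, hy⟩ := exists_algebraicIndependent_of_ltSeries (k := k) l
  have := hy.lift_cardinalMk_le_trdeg.trans (Cardinal.lift_le.2 (h _ l.head.2))
  simp only [Cardinal.mk_fintype, hcard, Cardinal.lift_natCast, Nat.cast_le] at this
  exact_mod_cast this

theorem natCast_le_ringKrullDim_of_strictMono {n : ℕ} (P : Fin (n + 1) → Ideal B)
    (hprime : ∀ i, (P i).IsPrime) (hP : StrictMono P) : (n : WithBot ℕ∞) ≤ ringKrullDim B :=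
  Order.LTSeries.length_le_krullDim (LTSeries.mk n (fun i ↦ ⟨P i, hprime i⟩) fun _ _ h ↦ hP h)

end ChainsOfPrimes

section AdjacentMinors

variable {k A : Type*} [Field k] [CommRing A] [Algebra k A]

theorem mul_mem_adjoin_range_of_eq {n : ℕ} (s : Fin n → A) {a b : A} (i j : Fin n)
    (h : a * b = s i * s j) : a * b ∈ adjoin k (range s) :=
  h ▸ mul_mem (subset_adjoin ⟨i, rfl⟩) (subset_adjoin ⟨j, rfl⟩)

variable [IsDomain A]

theorem trdeg_le_of_mul_mem_adjoin {T : Set A} (hT : adjoin k T = ⊤) {n : ℕ} (s : Fin n → A)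
    {v : A} (hv0 : v ≠ 0) (hv : v ∈ adjoin k (range s))
    (h : ∀ t ∈ T, v * t ∈ adjoin k (range s)) : trdeg k A ≤ n := by
  set S := adjoin k (range s)
  have halg : ∀ t ∈ T, IsAlgebraic S t := fun t ht ↦
    IsAlgebraic.of_mul (mem_nonZeroDivisors_of_ne_zero hv0) (isAlgebraic_algebraMap (⟨v, hv⟩ : S))
      (isAlgebraic_algebraMap (⟨v * t, h t ht⟩ : S))
  have hle : (⊤ : Subalgebra k A) ≤ (adjoin S T).restrictScalars k := hT ▸ adjoin_le subset_adjoin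
  have htop : adjoin S T = ⊤ := eq_top_iff.2 fun _ _ ↦ hle trivial
  have : Algebra.IsAlgebraic S A := by
    rw [Algebra.isAlgebraic_iff, ← htop]
    exact Algebra.isAlgebraic_adjoin_iff.2 halg
  exact (IsAlgebraic.trdeg_le_cardinalMk k (range s)).trans
    (by simpa using Cardinal.mk_range_le_lift (f := s))

variable {a11 a21 a12 a22 a13 a23 a14 a24 : A}

theorem trdeg_le_five_of_adjacent_minors_of_ne_zero
    (hgen : adjoin k {a11, a21, a12, a22, a13, a23, a14, a24} = ⊤)
    (h1 : a11 * a22 = a21 * a12) (h2 : a12 * a23 = a22 * a13) (h3 : a13 * a24 = a23 * a14)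
    (h12 : a12 ≠ 0) : trdeg k A ≤ 5 := by
  have h21 : a12 * a21 = a11 * a22 := by linear_combination -h1
  by_cases h13 : a13 = 0
  · have h23 : a23 = 0 := by simpa [h13, h12] using h2
    refine trdeg_le_of_mul_mem_adjoin hgen ![a12, a11, a22, a14, a24] h12
      (subset_adjoin ⟨0, rfl⟩) ?_
    simp only [mem_insert_iff, mem_singleton_iff, forall_eq_or_imp, forall_eq, h13, h23,
      mul_zero, zero_mem, true_and]
    exact ⟨mul_mem_adjoin_range_of_eq _ 0 1 rfl, mul_mem_adjoin_range_of_eq _ 1 2 h21,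
      mul_mem_adjoin_range_of_eq _ 0 0 rfl, mul_mem_adjoin_range_of_eq _ 0 2 rfl,
      mul_mem_adjoin_range_of_eq _ 0 3 rfl, mul_mem_adjoin_range_of_eq _ 0 4 rfl⟩
  · have h24 : a12 * a24 = a22 * a14 :=
      mul_left_cancel₀ h13 (by linear_combination a12 * h3 + a14 * h2)
    refine trdeg_le_of_mul_mem_adjoin hgen ![a12, a11, a22, a13, a14] h12
      (subset_adjoin ⟨0, rfl⟩) ?_
    simp only [mem_insert_iff, mem_singleton_iff, forall_eq_or_imp, forall_eq]
    exact ⟨mul_mem_adjoin_range_of_eq _ 0 1 rfl, mul_mem_adjoin_range_of_eq _ 1 2 h21,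
      mul_mem_adjoin_range_of_eq _ 0 0 rfl, mul_mem_adjoin_range_of_eq _ 0 2 rfl,
      mul_mem_adjoin_range_of_eq _ 0 3 rfl, mul_mem_adjoin_range_of_eq _ 2 3 h2,
      mul_mem_adjoin_range_of_eq _ 0 4 rfl, mul_mem_adjoin_range_of_eq _ 2 4 h24⟩

theorem trdeg_le_five_of_adjacent_minors
    (hgen : adjoin k {a11, a21, a12, a22, a13, a23, a14, a24} = ⊤)
    (h1 : a11 * a22 = a21 * a12) (h2 : a12 * a23 = a22 * a13) (h3 : a13 * a24 = a23 * a14) :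
    trdeg k A ≤ 5 := by
  -- the relations are invariant under swapping the rows and under reversing the columns
  have swap_rows : adjoin k {a21, a11, a22, a12, a23, a13, a24, a14} = ⊤ := by
    convert hgen using 2; ext; simp only [mem_insert_iff, mem_singleton_iff]; tauto
  have reverse_cols : adjoin k {a14, a24, a13, a23, a12, a22, a11, a21} = ⊤ := by
    convert hgen using 2; ext; simp only [mem_insert_iff, mem_singleton_iff]; tauto
  have swap_reverse : adjoin k {a24, a14, a23, a13, a22, a12, a21, a11} = ⊤ := by
    convert hgen using 2; ext; simp only [mem_insert_iff, mem_singleton_iff]; tauto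
  rcases ne_or_eq a12 0 with h12 | h12
  · exact trdeg_le_five_of_adjacent_minors_of_ne_zero hgen h1 h2 h3 h12
  rcases ne_or_eq a22 0 with h22 | h22
  · exact trdeg_le_five_of_adjacent_minors_of_ne_zero swap_rows h1.symm h2.symm h3.symm h22
  rcases ne_or_eq a13 0 with h13 | h13
  · exact trdeg_le_five_of_adjacent_minors_of_ne_zero reverse_cols (by linear_combination -h3)
      (by linear_combination -h2) (by linear_combination -h1) h13
  rcases ne_or_eq a23 0 with h23 | h23
  · exact trdeg_le_five_of_adjacent_minors_of_ne_zero swap_reverse (by linear_combination h3)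
      (by linear_combination h2) (by linear_combination h1) h23
  refine (trdeg_le_of_mul_mem_adjoin hgen ![a11, a21, a14, a24] one_ne_zero (one_mem _) ?_).trans
    (by norm_num)
  simp only [mem_insert_iff, mem_singleton_iff, forall_eq_or_imp, forall_eq, h12, h22, h13, h23,
    one_mul, zero_mem, true_and]
  exact ⟨subset_adjoin ⟨0, rfl⟩, subset_adjoin ⟨1, rfl⟩, subset_adjoin ⟨2, rfl⟩,
    subset_adjoin ⟨3, rfl⟩⟩

end AdjacentMinors

section ZeroFirstVars

variable {K : Type*} [CommRing K] {n : ℕ}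

def zeroFirstVars (j : ℕ) : MvPolynomial (Fin n) K →ₐ[K] MvPolynomial (Fin n) K :=
  aeval fun i ↦ if (i : ℕ) < j then 0 else X i

theorem zeroFirstVars_comp_of_le {j j' : ℕ} (h : j ≤ j') :
    (zeroFirstVars j').comp (zeroFirstVars j) =
      (zeroFirstVars j' : MvPolynomial (Fin n) K →ₐ[K] _) := by
  ext i
  by_cases hi : (i : ℕ) < j
  · simp [zeroFirstVars, hi, hi.trans_le h]
  · simp [zeroFirstVars, hi]

theorem ker_zeroFirstVars_mono :
    Monotone fun j ↦ RingHom.ker (zeroFirstVars (K := K) (n := n) j) := fun j j' h f hf ↦ by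
  rw [RingHom.mem_ker] at hf ⊢
  rw [← zeroFirstVars_comp_of_le h, AlgHom.comp_apply, hf, map_zero]

end ZeroFirstVars

theorem adjoin_vars_eq_top :
    adjoin ℚ ({x11, x21, x12, x22, x13, x23, x14, x24} : Set R) = ⊤ := by
  refine eq_top_iff.2 (adjoin_range_X.ge.trans (adjoin_mono ?_))
  rintro _ ⟨i, rfl⟩
  fin_cases i <;> simp [x11, x21, x12, x22, x13, x23, x14, x24]

theorem trdeg_le_five_of_surjective {A : Type*} [CommRing A] [IsDomain A] [Algebra ℚ A]
    (f : R →ₐ[ℚ] A) (hf : Function.Surjective f) (hI : I ≤ RingHom.ker f) : trdeg ℚ A ≤ 5 := by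
  have hgen : adjoin ℚ {f x11, f x21, f x12, f x22, f x13, f x23, f x14, f x24} = ⊤ := by
    have := congrArg (Subalgebra.map f) adjoin_vars_eq_top
    rw [AlgHom.map_adjoin, Algebra.map_top, (AlgHom.range_eq_top f).2 hf] at this
    simpa only [image_insert_eq, image_singleton] using this
  have minor {a b c d : R} (h : a * b - c * d ∈ I) : f a * f b = f c * f d := by
    simpa [sub_eq_zero] using hI h
  exact trdeg_le_five_of_adjacent_minors hgen (minor (Ideal.subset_span (by simp)))
    (minor (Ideal.subset_span (by simp))) (minor (Ideal.subset_span (by simp)))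

-- The variables of `R` are indexed as `x11, x22, x21, x12, x23, x13, x14, x24`; the columns of the
-- image matrix are `u₁ (u₀, u₅)`, `u₂ (u₀, u₅)`, `0` and `(u₃, u₄)`.
def paramQ2 : R →ₐ[ℚ] MvPolynomial (Fin 6) ℚ :=
  aeval ![X 0 * X 1, X 5 * X 2, X 5 * X 1, X 0 * X 2, 0, 0, X 3, X 4]

theorem I_le_ker_paramQ2 : I ≤ RingHom.ker paramQ2 := by
  rw [I, Ideal.span_le]
  simp only [insert_subset_iff, singleton_subset_iff, SetLike.mem_coe, RingHom.mem_ker]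
  simp [paramQ2, x11, x21, x12, x22, x13, x23, x14, x24]
  ring

theorem five_le_ringKrullDim : 5 ≤ ringKrullDim (R ⧸ I) := by
  set ψ := Ideal.Quotient.liftₐ I paramQ2 I_le_ker_paramQ2
  have hψ (f : R) : ψ (Ideal.Quotient.mk I f) = paramQ2 f := rfl
  refine natCast_le_ringKrullDim_of_strictMono
    (fun j : Fin 6 ↦ (RingHom.ker (zeroFirstVars (K := ℚ) j)).comap ψ)
    (fun _ ↦ (RingHom.ker_isPrime _).comap ψ) ?_
  rw [Fin.strictMono_iff_lt_succ]
  intro j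
  -- the `j`-th of these entries is the first one killed by setting `u_j` to zero
  refine SetLike.lt_iff_le_and_exists.2 ⟨Ideal.comap_mono (ker_zeroFirstVars_mono (by simp)),
    Ideal.Quotient.mk I (![x11, x21, x22, x14, x24] j), ?_, ?_⟩ <;>
  fin_cases j <;> simp [hψ, paramQ2, zeroFirstVars, x11, x21, x22, x14, x24]

theorem dim_R_mod_I : ringKrullDim (R ⧸ I) = 5 := by
  refine le_antisymm (ringKrullDim_le_of_trdeg_quotient_le (k := ℚ) 5 fun P _ ↦ ?_)
    five_le_ringKrullDim
  exact trdeg_le_five_of_surjective ((Ideal.Quotient.mkₐ ℚ P).comp (Ideal.Quotient.mkₐ ℚ I))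
    ((Ideal.Quotient.mkₐ_surjective ℚ P).comp (Ideal.Quotient.mkₐ_surjective ℚ I))
    fun g hg ↦ by simp [Ideal.Quotient.eq_zero_iff_mem.2 hg]

end
end
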